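/- arXiv:2301.08924 — 15 statements merged into one kernel-verified Lean document; each statement's English description precedes it below -/
import Mathlib

section
/- Let G = ⊕_{i∈I} G_i be a direct sum of abelian groups such that for each index i there exists an index j ≠ i with G_i ≅ G_j. Then every characteristic subgroup of G is fully invariant. -/
/-!
Write `eᵢ : Gᵢ → G` for the inclusions. For `x ∈ H` and an endomorphism `f`,
`f x = ∑ᵢ (f ∘ eᵢ) (xᵢ)`, so it suffices that `g (xᵢ) ∈ H` for every homomorphism `g : Gᵢ → G`.
If `g` vanishes in coordinate `i`, then `x ↦ x + g (xᵢ)` is an automorphism (a transvection),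
so `g (xᵢ) = (x + g (xᵢ)) - x ∈ H`. The remaining part of `g` is `u ↦ eᵢ (a u)` with
`a ∈ End Gᵢ`; here an isomorphism `θ : Gᵢ ≅ Gⱼ`, `j ≠ i`, lets us use two transvections:
first `eⱼ (θ xᵢ) ∈ H`, then, transvecting at `j` with `eᵢ ∘ a ∘ θ⁻¹`, `eᵢ (a xᵢ) ∈ H`.
-/

section

variable {ι : Type*} {G : ι → Type*} [∀ i, AddCommGroup (G i)]

def transvection (i : ι) (g : G i →+ Π₀ i, G i) (hg : ∀ u, g u i = 0) :
    (Π₀ i, G i) ≃+ (Π₀ i, G i) where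
  toFun x := x + g (x i)
  invFun x := x - g (x i)
  left_inv x := by
    simp only [DFinsupp.add_apply, hg, add_zero, add_sub_cancel_right]
  right_inv x := by
    simp only [DFinsupp.sub_apply, hg, sub_zero, sub_add_cancel]
  map_add' x y := by
    simp only [DFinsupp.add_apply, map_add]
    abel

theorem transvection_apply (i : ι) (g : G i →+ Π₀ i, G i) (hg : ∀ u, g u i = 0)
    (x : Π₀ i, G i) : transvection i g hg x = x + g (x i) :=
  rfl

theorem apply_eval_mem_of_eval_eq_zero {H : AddSubgroup (Π₀ i, G i)}
    (hH : ∀ φ : (Π₀ i, G i) ≃+ (Π₀ i, G i), ∀ x ∈ H, φ x ∈ H)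
    {i : ι} (g : G i →+ Π₀ i, G i) (hg : ∀ u, g u i = 0) {x : Π₀ i, G i} (hx : x ∈ H) :
    g (x i) ∈ H := by
  have h := H.sub_mem (hH (transvection i g hg) x hx) hx
  rwa [transvection_apply, add_sub_cancel_left] at h

theorem single_apply_eval_mem [DecidableEq ι] {H : AddSubgroup (Π₀ i, G i)}
    (hH : ∀ φ : (Π₀ i, G i) ≃+ (Π₀ i, G i), ∀ x ∈ H, φ x ∈ H)
    {i j : ι} (hji : j ≠ i) (θ : G i ≃+ G j) (a : G i →+ G i) {x : Π₀ i, G i} (hx : x ∈ H) :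
    DFinsupp.single i (a (x i)) ∈ H := by
  have hz : DFinsupp.single j (θ (x i)) ∈ H :=
    apply_eval_mem_of_eval_eq_zero hH ((DFinsupp.singleAddHom G j).comp θ.toAddMonoidHom)
      (fun _ => DFinsupp.single_eq_of_ne hji.symm) hx
  have h := apply_eval_mem_of_eval_eq_zero hH
    ((DFinsupp.singleAddHom G i).comp (a.comp θ.symm.toAddMonoidHom))
    (fun _ => DFinsupp.single_eq_of_ne hji) hz
  simpa using h

theorem apply_eval_mem [DecidableEq ι] {H : AddSubgroup (Π₀ i, G i)}
    (hH : ∀ φ : (Π₀ i, G i) ≃+ (Π₀ i, G i), ∀ x ∈ H, φ x ∈ H)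
    {i : ι} (hi : ∃ j : ι, j ≠ i ∧ Nonempty (G i ≃+ G j)) (g : G i →+ Π₀ i, G i)
    {x : Π₀ i, G i} (hx : x ∈ H) : g (x i) ∈ H := by
  obtain ⟨j, hji, ⟨θ⟩⟩ := hi
  let a : G i →+ G i := (DFinsupp.evalAddMonoidHom i).comp g
  let g₀ : G i →+ Π₀ i, G i := g - (DFinsupp.singleAddHom G i).comp a
  have hg₀ : ∀ u, g₀ u i = 0 := fun u => by
    simp only [g₀, a, AddMonoidHom.sub_apply, AddMonoidHom.comp_apply, DFinsupp.sub_apply,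
      DFinsupp.singleAddHom_apply, DFinsupp.single_eq_same]
    exact sub_self (g u i)
  have hsplit : g (x i) = g₀ (x i) + DFinsupp.single i (a (x i)) := by
    simp only [g₀, AddMonoidHom.sub_apply, AddMonoidHom.comp_apply, DFinsupp.singleAddHom_apply,
      sub_add_cancel]
  rw [hsplit]
  exact H.add_mem (apply_eval_mem_of_eval_eq_zero hH g₀ hg₀ hx)
    (single_apply_eval_mem hH hji θ a hx)

end

theorem stmt2_general {ι : Type*} (G : ι → Type*) [∀ i, AddCommGroup (G i)]
    (hiso : ∀ i : ι, ∃ j : ι, j ≠ i ∧ Nonempty (G i ≃+ G j))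
    (H : AddSubgroup (Π₀ i, G i))
    (hH : ∀ φ : (Π₀ i, G i) ≃+ (Π₀ i, G i), ∀ x ∈ H, φ x ∈ H) :
    ∀ f : (Π₀ i, G i) →+ (Π₀ i, G i), ∀ x ∈ H, f x ∈ H := by
  classical
  intro f x hx
  have hsum : f x = ∑ i ∈ x.support, f (DFinsupp.single i (x i)) := by
    conv_lhs => rw [← DFinsupp.sum_single (f := x)]
    rw [DFinsupp.sum, map_sum]
  rw [hsum]
  exact H.sum_mem fun i _ =>
    apply_eval_mem hH (hiso i) (f.comp (DFinsupp.singleAddHom G i)) hx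

/-- If `G = ⨁_{i∈I} G_i` and for each `i` there is `j ≠ i` with `G_i ≅ G_j`,
then every characteristic subgroup of `G` is fully invariant. -/
theorem stmt2 {ι : Type*} [DecidableEq ι] (G : ι → Type*) [∀ i, AddCommGroup (G i)]
    (hiso : ∀ i : ι, ∃ j : ι, j ≠ i ∧ Nonempty (G i ≃+ G j))
    (H : AddSubgroup (Π₀ i, G i))
    (hH : ∀ φ : (Π₀ i, G i) ≃+ (Π₀ i, G i), ∀ x ∈ H, φ x ∈ H) :
    ∀ f : (Π₀ i, G i) →+ (Π₀ i, G i), ∀ x ∈ H, f x ∈ H :=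
  stmt2_general G hiso H hH
end

section
/- Let G be an abelian group that is a direct sum G = ⊕_{i∈I} G_i, let π_i : G → G_i be the coordinate projections, and let H be a characteristic subgroup of G. Then the subgroup ⊕_{i∈I} (H ∩ G_i) is also a characteristic subgroup of G. -/
open DFinsupp

private theorem stmt3_single_mem {ι : Type*} [DecidableEq ι] (G : ι → Type*)
    [∀ i, AddCommGroup (G i)] (H : AddSubgroup (Π₀ i, G i))
    (hH : ∀ φ : (Π₀ i, G i) ≃+ (Π₀ i, G i), ∀ x ∈ H, φ x ∈ H)
    (φ : (Π₀ i, G i) ≃+ (Π₀ i, G i)) (i : ι) (a : G i)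
    (hx : DFinsupp.single i a ∈ H) (j : ι) (hij : j ≠ i) :
    DFinsupp.single j (φ (DFinsupp.single i a) j) ∈ H := by
  classical
  set e : (Π₀ i, G i) →+ (Π₀ i, G i) :=
    (DFinsupp.singleAddHom G j).comp ((DFinsupp.evalAddMonoidHom j).comp
      (φ.toAddMonoidHom.comp ((DFinsupp.singleAddHom G i).comp
        (DFinsupp.evalAddMonoidHom i)))) with he
  have he2 : ∀ y, e (e y) = 0 := by
    intro y
    simp [he, DFinsupp.evalAddMonoidHom, DFinsupp.coeFnAddMonoidHom,
      DFinsupp.single_eq_of_ne hij, DFinsupp.single_eq_of_ne hij.symm]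
  set θ : (Π₀ i, G i) ≃+ (Π₀ i, G i) :=
    { toFun := fun y => y + e y
      invFun := fun y => y - e y
      left_inv := fun y => by simp [map_add, he2]
      right_inv := fun y => by simp [map_sub, he2]
      map_add' := fun y z => by simp only [map_add]; abel } with hθ
  have hθx : θ (DFinsupp.single i a) ∈ H := hH θ _ hx
  have hval : θ (DFinsupp.single i a)
      = DFinsupp.single i a + DFinsupp.single j (φ (DFinsupp.single i a) j) := by
    rw [hθ]
    simp [he, DFinsupp.evalAddMonoidHom, DFinsupp.coeFnAddMonoidHom]
  have : DFinsupp.single j (φ (DFinsupp.single i a) j)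
      = θ (DFinsupp.single i a) - DFinsupp.single i a := by rw [hval]; abel
  rw [this]
  exact sub_mem hθx hx

private theorem stmt3_all_mem {ι : Type*} [DecidableEq ι] (G : ι → Type*)
    [∀ i, AddCommGroup (G i)] (H : AddSubgroup (Π₀ i, G i))
    (hH : ∀ φ : (Π₀ i, G i) ≃+ (Π₀ i, G i), ∀ x ∈ H, φ x ∈ H)
    (φ : (Π₀ i, G i) ≃+ (Π₀ i, G i)) (i : ι) (a : G i)
    (hx : DFinsupp.single i a ∈ H) (j : ι) :
    DFinsupp.single j (φ (DFinsupp.single i a) j) ∈ H := by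
  classical
  by_cases hij : j = i
  · subst hij
    set f := φ (DFinsupp.single j a) with hf
    have hfH : f ∈ H := hH φ _ hx
    have herase : f.erase j ∈ H := by
      have : (f.erase j).sum (fun k b => DFinsupp.single k b) = f.erase j :=
        DFinsupp.sum_single
      rw [← this]
      refine AddSubgroup.sum_mem H ?_
      intro k _
      by_cases hkj : k = j
      · subst hkj
        simp only [DFinsupp.erase_same, DFinsupp.single_zero]
        exact zero_mem H
      · rw [DFinsupp.erase_ne hkj]
        exact stmt3_single_mem G H hH φ j a hx k hkj
    have : DFinsupp.single j (f j) = f - f.erase j :=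
      eq_sub_of_add_eq (DFinsupp.single_add_erase j f)
    rw [this]
    exact sub_mem hfH herase
  · exact stmt3_single_mem G H hH φ i a hx j hij

/-- If `G = ⨁_{i∈I} G_i` and `H` is a characteristic subgroup of `G`,
then `⨁_{i∈I} (H ∩ G_i)` (the internal sum of the `H ∩ G_i`) is characteristic in `G`. -/
theorem stmt3 {ι : Type*} [DecidableEq ι] (G : ι → Type*) [∀ i, AddCommGroup (G i)]
    (H : AddSubgroup (Π₀ i, G i))
    (hH : ∀ φ : (Π₀ i, G i) ≃+ (Π₀ i, G i), ∀ x ∈ H, φ x ∈ H) :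
    ∀ φ : (Π₀ i, G i) ≃+ (Π₀ i, G i),
      ∀ x ∈ ⨆ i : ι, (H ⊓ (DFinsupp.singleAddHom G i).range),
        φ x ∈ ⨆ i : ι, (H ⊓ (DFinsupp.singleAddHom G i).range) := by
  classical
  intro φ x hx
  refine AddSubgroup.iSup_induction (C := fun y =>
      φ y ∈ ⨆ i : ι, (H ⊓ (DFinsupp.singleAddHom G i).range)) _ hx ?_ (by simpa using (zero_mem (⨆ i : ι, (H ⊓ (DFinsupp.singleAddHom G i).range)) : _)) ?_
  · rintro i y ⟨hyH, ⟨a, rfl⟩⟩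
    simp only [DFinsupp.singleAddHom_apply] at hyH ⊢
    have : (φ (DFinsupp.single i a)).sum (fun k b => DFinsupp.single k b)
        = φ (DFinsupp.single i a) := DFinsupp.sum_single
    rw [← this]
    refine AddSubgroup.sum_mem _ ?_
    intro k _
    refine AddSubgroup.mem_iSup_of_mem k ⟨stmt3_all_mem G H hH φ i a hyH k, ⟨_, rfl⟩⟩
  · intro y z hy hz
    rw [map_add]
    exact add_mem hy hz
end

section
/- Let G be an abelian group that is a direct sum G = ⊕_{i∈I} G_i, with coordinate projections π_i : G → G_i, and let H be a characteristic subgroup of G. Then the subgroup ⊕_{i∈I} π_i(H) is also a characteristic subgroup of G. -/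
/-!
For `j ≠ i` and any homomorphism `f : G i →+ G j`, the transvection `x ↦ x + single j (f (x i))`
is an automorphism of `⨁ G`, so a characteristic `H` contains `single j (f (h i))` for all `h ∈ H`.
Hence every off-diagonal entry `πⱼ ∘ φ ∘ ιᵢ` of an automorphism `φ` maps `πᵢ(H)` into `πⱼ(H)`.
The diagonal entry is reduced to the off-diagonal ones: if `x ∈ ⨁ πᵢ(H)` and `h ∈ H` has
`h j = x j`, then `x = h - (h - x)` where `φ h ∈ H` and `h - x` has vanishing `j`-th coordinate.
-/

open AddSubgroup

namespace DFinsupp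

variable {ι : Type*} {G : ι → Type*} [∀ i, AddCommGroup (G i)]

/-- The subgroup `⨁ᵢ Sᵢ` of `⨁ᵢ Gᵢ`. -/
def piAddSubgroup (S : ∀ i, AddSubgroup (G i)) : AddSubgroup (Π₀ i, G i) :=
  (AddSubgroup.pi Set.univ S).comap coeFnAddMonoidHom

@[simp]
theorem mem_piAddSubgroup {S : ∀ i, AddSubgroup (G i)} {x : Π₀ i, G i} :
    x ∈ piAddSubgroup S ↔ ∀ i, x i ∈ S i := by
  simp [piAddSubgroup, AddSubgroup.mem_pi]

theorem le_piAddSubgroup_map_eval (H : AddSubgroup (Π₀ i, G i)) :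
    H ≤ piAddSubgroup fun i => H.map (evalAddMonoidHom i) :=
  fun h hh => mem_piAddSubgroup.mpr fun _ => ⟨h, hh, rfl⟩

variable [DecidableEq ι]

theorem iSup_map_singleAddHom (S : ∀ i, AddSubgroup (G i)) :
    ⨆ i, (S i).map (singleAddHom G i) = piAddSubgroup S := by
  refine le_antisymm (iSup_le fun i => map_le_iff_le_comap.mpr fun a ha => ?_) fun x hx => ?_
  · refine mem_piAddSubgroup.mpr fun j => ?_
    obtain rfl | hij := eq_or_ne i j
    · simp [ha]
    · simp [single_eq_of_ne hij.symm]
  · classical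
    rw [← sum_single (f := x)]
    exact dfinsuppSum_mem _ _ _ fun i _ =>
      mem_iSup_of_mem i ⟨x i, mem_piAddSubgroup.mp hx i, rfl⟩

def addTransvection {i j : ι} (hij : i ≠ j) (f : G i →+ G j) :
    (Π₀ k, G k) ≃+ (Π₀ k, G k) where
  toFun x := x + single j (f (x i))
  invFun x := x - single j (f (x i))
  left_inv x := by simp [single_eq_of_ne hij]
  right_inv x := by simp [single_eq_of_ne hij]
  map_add' x y := by simp only [add_apply, map_add, single_add]; abel

theorem addTransvection_apply {i j : ι} (hij : i ≠ j) (f : G i →+ G j) (x : Π₀ k, G k) :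
    addTransvection hij f x = x + single j (f (x i)) :=
  rfl

section Characteristic

variable (H : AddSubgroup (Π₀ i, G i)) [hH : H.Characteristic]
include hH

theorem single_mem_of_characteristic {i j : ι} (hij : i ≠ j) (f : G i →+ G j)
    {h : Π₀ k, G k} (hh : h ∈ H) : single j (f (h i)) ∈ H := by
  have htrans : addTransvection hij f h ∈ H := characteristic_iff_le_comap.mp hH _ hh
  simpa [addTransvection_apply] using H.sub_mem htrans hh

theorem map_mem_map_eval_of_ne {i j : ι} (hij : i ≠ j) (f : G i →+ G j) {a : G i}
    (ha : a ∈ H.map (evalAddMonoidHom i)) : f a ∈ H.map (evalAddMonoidHom j) := by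
  obtain ⟨h, hh, rfl⟩ := ha
  exact ⟨_, single_mem_of_characteristic H hij f hh, single_eq_same⟩

theorem apply_apply_mem_of_apply_eq_zero (φ : (Π₀ i, G i) ≃+ (Π₀ i, G i)) {j : ι}
    {y : Π₀ i, G i} (hy : y ∈ piAddSubgroup fun i => H.map (evalAddMonoidHom i))
    (hyj : y j = 0) : φ y j ∈ H.map (evalAddMonoidHom j) := by
  classical
  rw [← sum_single (f := y), map_dfinsuppSum, sum_apply]
  refine sum_mem fun i hi => ?_
  have hij : i ≠ j := by rintro rfl; exact (mem_support_iff.mp hi) hyj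
  exact map_mem_map_eval_of_ne H hij
    ((evalAddMonoidHom j).comp (φ.toAddMonoidHom.comp (singleAddHom G i)))
    (mem_piAddSubgroup.mp hy i)

instance piAddSubgroup_map_eval_characteristic :
    (piAddSubgroup fun i => H.map (evalAddMonoidHom i)).Characteristic := by
  refine characteristic_iff_le_comap.mpr fun φ x hx => mem_piAddSubgroup.mpr fun j => ?_
  obtain ⟨h, hh, hhx⟩ := mem_piAddSubgroup.mp hx j
  change h j = x j at hhx
  have hdiff : h - x ∈ piAddSubgroup fun i => H.map (evalAddMonoidHom i) :=
    sub_mem (le_piAddSubgroup_map_eval H hh) hx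
  have hdiff_j : (h - x) j = 0 := by simpa [sub_eq_zero] using hhx
  have hx_eq : φ x j = φ h j - φ (h - x) j := by simp
  change φ x j ∈ _
  rw [hx_eq]
  exact sub_mem ⟨φ h, characteristic_iff_le_comap.mp hH φ hh, rfl⟩
    (apply_apply_mem_of_apply_eq_zero H φ hdiff hdiff_j)

end Characteristic

end DFinsupp

/-- If `G = ⨁_{i∈I} G_i` with coordinate projections `π_i` and `H` is a
characteristic subgroup of `G`, then `⨁_{i∈I} π_i(H)` is characteristic in `G`. -/
theorem stmt4 {ι : Type*} [DecidableEq ι] (G : ι → Type*) [∀ i, AddCommGroup (G i)]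
    (H : AddSubgroup (Π₀ i, G i))
    (hH : ∀ φ : (Π₀ i, G i) ≃+ (Π₀ i, G i), ∀ x ∈ H, φ x ∈ H) :
    ∀ φ : (Π₀ i, G i) ≃+ (Π₀ i, G i),
      ∀ x ∈ ⨆ i : ι, H.map ((DFinsupp.singleAddHom G i).comp (DFinsupp.evalAddMonoidHom i)),
        φ x ∈ ⨆ i : ι, H.map ((DFinsupp.singleAddHom G i).comp (DFinsupp.evalAddMonoidHom i)) := by
  have : H.Characteristic := characteristic_iff_le_comap.mpr hH
  simp_rw [← map_map, DFinsupp.iSup_map_singleAddHom]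
  exact fun φ x hx => characteristic_iff_le_comap.mp inferInstance φ hx
end

section
/- Let G = A ⊕ B be an abelian group with A having no 2-torsion (A[2] = 0), and let H be a nonzero characteristic subgroup of G with H ⊄ B. Then H ∩ A ≠ 0. -/
/-- If `G = A ⊕ B` with `A[2] = 0`, and `H` is a nonzero characteristic
subgroup of `G` not contained in `B`, then `H ∩ A ≠ 0`. -/
theorem stmt5 {A B : Type*} [AddCommGroup A] [AddCommGroup B]
    (hA : ∀ a : A, 2 • a = 0 → a = 0)
    (H : AddSubgroup (A × B))
    (hH : ∀ φ : (A × B) ≃+ (A × B), ∀ x ∈ H, φ x ∈ H)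
    (hne : H ≠ ⊥)
    (hnotinB : ∃ h ∈ H, h.1 ≠ 0) :
    ∃ a : A, a ≠ 0 ∧ ((a, (0 : B)) ∈ H) := by
  obtain ⟨⟨a, b⟩, hmem, ha⟩ := hnotinB
  have h2 : ((a, -b) : A × B) ∈ H :=
    hH (AddEquiv.prodCongr (AddEquiv.refl A) (AddEquiv.neg B)) _ hmem
  refine ⟨a + a, fun h => ha (hA a (by simpa [two_nsmul] using h)), ?_⟩
  have := H.add_mem hmem h2
  simpa using this
end

section
/- Let p be a prime and let G be an abelian p-group with p²G = 0. Then every characteristic subgroup of G is fully invariant. -/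
section Helpers

variable {G : Type*} [AddCommGroup G]

/-- The homomorphism `ZMod n →+ G` sending `1` to `k`, given `(n : ℤ) • k = 0`. -/
private def psi (n : ℕ) (k : G) (hk : (n : ℤ) • k = 0) : ZMod n →+ G :=
  ZMod.lift n ⟨zmultiplesHom G k, by simpa using hk⟩

private lemma psi_intCast (n : ℕ) (k : G) (hk : (n : ℤ) • k = 0) (m : ℤ) :
    psi n k hk ((m : ℤ) : ZMod n) = m • k := by
  simp [psi]

private lemma phi_psi {n : ℕ} (φ : G →+ ZMod n) {z : G} (hz : (n : ℤ) • z = 0)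
    (hφz : φ z = 1) (c : ZMod n) : φ (psi n z hz c) = c := by
  obtain ⟨m, rfl⟩ := ZMod.intCast_surjective c
  rw [psi_intCast, map_zsmul, hφz]
  simp

private lemma phi_psi_zero {n : ℕ} (φ : G →+ ZMod n) {k : G} (hk : (n : ℤ) • k = 0)
    (hφk : φ k = 0) (c : ZMod n) : φ (psi n k hk c) = 0 := by
  obtain ⟨m, rfl⟩ := ZMod.intCast_surjective c
  rw [psi_intCast, map_zsmul, hφk, smul_zero]

/-- The key step: if `φ k = 0` then `g ↦ g + ψ_k (φ g)` is an automorphism, so it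
preserves the characteristic subgroup `H`. -/
private lemma step {H : AddSubgroup G} (hH : ∀ φ : G ≃+ G, ∀ x ∈ H, φ x ∈ H)
    (n : ℕ) (φ : G →+ ZMod n) (k : G) (hk0 : φ k = 0) (hk : (n : ℤ) • k = 0)
    {x : G} (hx : x ∈ H) : psi n k hk (φ x) ∈ H := by
  have hφψ : ∀ c : ZMod n, φ (psi n k hk c) = 0 := phi_psi_zero φ hk hk0
  let α : G ≃+ G :=
    { toFun := fun g => g + psi n k hk (φ g)
      invFun := fun g => g - psi n k hk (φ g)
      left_inv := fun g => by
        simp only [map_add, hφψ, add_zero, add_sub_cancel_right]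
      right_inv := fun g => by
        simp only [map_sub, hφψ, sub_zero, sub_add_cancel]
      map_add' := fun a b => by
        simp only [map_add]
        abel }
  have hmem : x + psi n k hk (φ x) ∈ H := hH α x hx
  have := H.sub_mem hmem hx
  simpa using this

/-- The core argument: if there is `φ : G →+ ZMod n` with `φ x = 1` then `f x ∈ H`. -/
private lemma core {H : AddSubgroup G} (hH : ∀ φ : G ≃+ G, ∀ x ∈ H, φ x ∈ H)
    (n : ℕ) (φ : G →+ ZMod n) (f : G →+ G) {x : G} (hx : x ∈ H) (hφx : φ x = 1)
    (hnx : (n : ℤ) • x = 0) (hnfx : (n : ℤ) • f x = 0) : f x ∈ H := by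
  set y := f x with hy
  set k := y - psi n x hnx (φ y) with hkdef
  have hk0 : φ k = 0 := by
    rw [hkdef, map_sub, phi_psi φ hnx hφx, sub_self]
  have hkn : (n : ℤ) • k = 0 := by
    obtain ⟨m, hm⟩ := ZMod.intCast_surjective (φ y)
    rw [hkdef, smul_sub, hnfx, ← hm, psi_intCast, smul_comm, hnx, smul_zero, sub_zero]
  have hkH : k ∈ H := by
    have hstep := step hH n φ k hk0 hkn hx
    rw [hφx, show (1 : ZMod n) = ((1 : ℤ) : ZMod n) by simp, psi_intCast, one_smul] at hstep
    exact hstep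
  have hmxH : psi n x hnx (φ y) ∈ H := by
    obtain ⟨m, hm⟩ := ZMod.intCast_surjective (φ y)
    rw [← hm, psi_intCast]
    exact H.zsmul_mem hx m
  have hfinal : y = psi n x hnx (φ y) + k := by rw [hkdef]; abel
  rw [hfinal]
  exact H.add_mem hmxH hkH

/-- Arithmetic in `ZMod p²`: if the annihilator of `a` annihilates `b`, then `b ∈ (a)`. -/
private lemma arith (p : ℕ) (hp : p.Prime) (a b : ZMod (p ^ 2))
    (hab : ∀ c : ZMod (p ^ 2), c * a = 0 → c * b = 0) : ∃ x, a * x = b := by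
  haveI : NeZero (p ^ 2) := ⟨pow_ne_zero 2 hp.ne_zero⟩
  by_cases ha : IsUnit a
  · obtain ⟨u, rfl⟩ := ha
    exact ⟨(↑u⁻¹ : ZMod (p ^ 2)) * b, by rw [← mul_assoc, u.mul_inv, one_mul]⟩
  by_cases ha0 : a = 0
  · refine ⟨0, ?_⟩
    have := hab 1 (by simp [ha0])
    simp only [one_mul] at this
    simp [this]
  -- `a` is a nonzero nonunit, so `a = p * t` with `t` a unit
  have hcast : ((a.val : ℕ) : ZMod (p ^ 2)) = a := ZMod.natCast_zmod_val a
  have hpa : p ∣ a.val := by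
    by_contra hnd
    exact ha (by
      rw [← hcast, ZMod.isUnit_iff_coprime]
      exact (Nat.Coprime.pow_right 2 ((Nat.coprime_comm).mp
        ((Nat.Prime.coprime_iff_not_dvd hp).mpr hnd))))
  obtain ⟨t, ht⟩ := hpa
  have htlt : t < p := by
    have hval : a.val < p ^ 2 := ZMod.val_lt a
    rw [ht] at hval
    by_contra hle
    push_neg at hle
    have : p * p ≤ p * t := Nat.mul_le_mul_left p hle
    rw [pow_two] at hval
    omega
  have ht0 : t ≠ 0 := by
    rintro rfl
    apply ha0
    rw [← hcast, ht]
    simp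
  have hut : IsUnit ((t : ℕ) : ZMod (p ^ 2)) := by
    rw [ZMod.isUnit_iff_coprime]
    refine Nat.Coprime.pow_right 2 ?_
    rw [Nat.coprime_comm]
    exact (Nat.Prime.coprime_iff_not_dvd hp).mpr (fun hdvd => by
      have := Nat.le_of_dvd (Nat.pos_of_ne_zero ht0) hdvd
      omega)
  have hpb : p ∣ b.val := by
    have h1 : ((p : ℕ) : ZMod (p ^ 2)) * a = 0 := by
      rw [← hcast, ht]
      push_cast
      rw [← mul_assoc, ← Nat.cast_mul, ← pow_two, ZMod.natCast_self, zero_mul]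
    have h2 := hab _ h1
    have hbcast : ((b.val : ℕ) : ZMod (p ^ 2)) = b := ZMod.natCast_zmod_val b
    rw [← hbcast, ← Nat.cast_mul, ZMod.natCast_eq_zero_iff] at h2
    have h3 : p * p ∣ p * b.val := by rw [← pow_two]; exact h2
    exact (Nat.mul_dvd_mul_iff_left hp.pos).mp h3
  obtain ⟨s, hs⟩ := hpb
  obtain ⟨u, hu⟩ := hut
  refine ⟨(↑u⁻¹ : ZMod (p ^ 2)) * (s : ℕ), ?_⟩
  have hbcast : ((b.val : ℕ) : ZMod (p ^ 2)) = b := ZMod.natCast_zmod_val b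
  rw [← hcast, ht, ← hbcast, hs]
  push_cast
  rw [← hu, mul_assoc, ← mul_assoc ((u : ZMod (p ^ 2))), u.mul_inv, one_mul]

/-- Baer's criterion holds for `ZMod p²` over itself. -/
private lemma baer_zmod (p : ℕ) (hp : p.Prime) :
    Module.Baer (ZMod (p ^ 2)) (ZMod (p ^ 2)) := by
  haveI : NeZero (p ^ 2) := ⟨pow_ne_zero 2 hp.ne_zero⟩
  haveI : IsPrincipalIdealRing (ZMod (p ^ 2)) :=
    IsPrincipalIdealRing.of_surjective (F := ℤ →+* ZMod (p ^ 2))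
      (Int.castRingHom (ZMod (p ^ 2))) ZMod.intCast_surjective
  intro I g
  haveI := IsPrincipalIdealRing.principal I
  set a := Submodule.IsPrincipal.generator I with hadef
  have hmem : a ∈ I := Submodule.IsPrincipal.generator_mem I
  set b := g ⟨a, hmem⟩ with hbdef
  have hann : ∀ c : ZMod (p ^ 2), c * a = 0 → c * b = 0 := by
    intro c hc
    have h0 : c • (⟨a, hmem⟩ : I) = 0 := by
      apply Subtype.ext
      simpa [smul_eq_mul] using hc
    calc c * b = c • g ⟨a, hmem⟩ := by rw [smul_eq_mul]
      _ = g (c • ⟨a, hmem⟩) := (map_smul g c _).symm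
      _ = 0 := by rw [h0, map_zero]
  obtain ⟨x, hx⟩ := arith p hp a b hann
  refine ⟨LinearMap.toSpanSingleton (ZMod (p ^ 2)) (ZMod (p ^ 2)) x, ?_⟩
  intro y hy
  obtain ⟨c, hc⟩ := (Submodule.IsPrincipal.mem_iff_eq_smul_generator I).mp hy
  have hsub : (⟨y, hy⟩ : I) = c • (⟨a, hmem⟩ : I) := by
    apply Subtype.ext
    simpa using hc
  rw [hsub, map_smul, ← hbdef, LinearMap.toSpanSingleton_apply]
  rw [hc]
  simp only [smul_eq_mul, ← hadef]
  rw [mul_assoc, hx]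

/-- Existence of a functional `G →+ ZMod p²` taking value `1` on an element of order `p²`. -/
private lemma exists_phi_sq (p : ℕ) (hp : p.Prime) (hG : ∀ g : G, (p ^ 2) • g = 0)
    {z : G} (hz : ¬ p • z = 0) : ∃ φ : G →+ ZMod (p ^ 2), φ z = 1 := by
  haveI : NeZero (p ^ 2) := ⟨pow_ne_zero 2 hp.ne_zero⟩
  letI : Module (ZMod (p ^ 2)) G := AddCommGroup.zmodModule hG
  -- the order of z is p²
  have hord : ∀ c : ZMod (p ^ 2), c • z = 0 → c = 0 := by
    intro c hc
    obtain ⟨m, rfl⟩ := ZMod.intCast_surjective c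
    rw [Int.cast_smul_eq_zsmul] at hc
    have h1 : addOrderOf z ∣ p ^ 2 := addOrderOf_dvd_of_nsmul_eq_zero (hG z)
    obtain ⟨i, hi, hio⟩ := (Nat.dvd_prime_pow hp).mp h1
    have hi2 : i = 2 := by
      by_contra hne
      have hile : i ≤ 1 := by omega
      have : addOrderOf z ∣ p := by
        rw [hio]
        exact pow_dvd_pow p hile |>.trans (by rw [pow_one])
      exact hz (by
        have := addOrderOf_dvd_iff_nsmul_eq_zero.mp this
        exact this)
    have hdvd : ((addOrderOf z : ℕ) : ℤ) ∣ m := addOrderOf_dvd_iff_zsmul_eq_zero.mpr hc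
    rw [hio, hi2] at hdvd
    rw [ZMod.intCast_zmod_eq_zero_iff_dvd]
    exact_mod_cast hdvd
  have hinj : Function.Injective (LinearMap.toSpanSingleton (ZMod (p ^ 2)) G z) := by
    intro c d hcd
    have : (c - d) • z = 0 := by
      rw [sub_smul, sub_eq_zero]
      simpa [LinearMap.toSpanSingleton_apply] using hcd
    have h0 : c - d = 0 := hord _ this
    exact sub_eq_zero.mp h0
  obtain ⟨h, hh⟩ := (baer_zmod p hp).extension_property
    (LinearMap.toSpanSingleton (ZMod (p ^ 2)) G z) hinj LinearMap.id
  refine ⟨h.toAddMonoidHom, ?_⟩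
  have := congrArg (fun m => m (1 : ZMod (p ^ 2))) hh
  simpa [LinearMap.toSpanSingleton_apply] using this

/-- A nonzero vector in a `ZMod p`-vector space admits a functional taking value `1` on it. -/
private theorem aux_field (p : ℕ) [Fact p.Prime] (Q : Type*) [AddCommGroup Q] [Module (ZMod p) Q]
    (q : Q) (hq : q ≠ 0) : ∃ ℓ : Q →ₗ[ZMod p] ZMod p, ℓ q = 1 := by
  have hinj : LinearMap.ker (LinearMap.toSpanSingleton (ZMod p) Q q) = ⊥ := by
    rw [LinearMap.ker_eq_bot']
    intro c hc
    by_contra hc0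
    apply hq
    rw [LinearMap.toSpanSingleton_apply] at hc
    calc q = c⁻¹ • (c • q) := by rw [smul_smul, inv_mul_cancel₀ hc0, one_smul]
      _ = 0 := by rw [hc, smul_zero]
  obtain ⟨ℓ, hℓ⟩ := LinearMap.exists_leftInverse_of_injective
    (LinearMap.toSpanSingleton (ZMod p) Q q) hinj
  refine ⟨ℓ, ?_⟩
  have := LinearMap.ext_iff.mp hℓ (1 : ZMod p)
  simpa [LinearMap.toSpanSingleton_apply] using this

/-- Existence of a functional `G →+ ZMod p` taking value `1` on `x` of order `p` not in `pG`. -/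
private lemma exists_phi_p (p : ℕ) (hp : p.Prime) {x : G} (hx0 : x ≠ 0)
    (hnd : ¬ ∃ z : G, p • z = x) : ∃ φ : G →+ ZMod p, φ x = 1 := by
  haveI : Fact p.Prime := ⟨hp⟩
  let pm : G →+ G := AddMonoidHom.mk' (fun g => p • g) (fun a b => smul_add p a b)
  set N := pm.range with hNdef
  letI : Module (ZMod p) (G ⧸ N) := AddCommGroup.zmodModule (by
    intro q
    induction q using QuotientAddGroup.induction_on with
    | H g =>
      rw [← QuotientAddGroup.mk_nsmul]
      rw [QuotientAddGroup.eq_zero_iff]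
      exact ⟨g, rfl⟩)
  have hxQ : (QuotientAddGroup.mk x : G ⧸ N) ≠ 0 := by
    rw [Ne, QuotientAddGroup.eq_zero_iff]
    rintro ⟨z, hz⟩
    exact hnd ⟨z, hz⟩
  obtain ⟨ℓ, hℓ⟩ := aux_field p (G ⧸ N) (QuotientAddGroup.mk x) hxQ
  exact ⟨ℓ.toAddMonoidHom.comp (QuotientAddGroup.mk' N), hℓ⟩

end Helpers

/-- If `G` is an abelian `p`-group with `p²G = 0`, then every characteristic
subgroup of `G` is fully invariant. -/
theorem stmt6 {G : Type*} [AddCommGroup G] (p : ℕ) (hp : p.Prime)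
    (hG : ∀ g : G, (p ^ 2) • g = 0)
    (H : AddSubgroup G)
    (hH : ∀ φ : G ≃+ G, ∀ x ∈ H, φ x ∈ H) :
    ∀ f : G →+ G, ∀ x ∈ H, f x ∈ H := by
  intro f x hx
  by_cases hx0 : x = 0
  · rw [hx0, map_zero]; exact H.zero_mem
  have hsq : ∀ g : G, ((p ^ 2 : ℕ) : ℤ) • g = 0 := fun g => by
    rw [natCast_zsmul]; exact hG g
  by_cases hpx : p • x = 0
  · by_cases hdiv : ∃ z : G, p • z = x
    · -- x = p • z with z of order p²
      obtain ⟨z, hz⟩ := hdiv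
      have hpz : ¬ p • z = 0 := by rw [hz]; exact hx0
      obtain ⟨φ, hφz⟩ := exists_phi_sq p hp hG hpz
      set y := f z with hy
      set k := y - psi (p ^ 2) z (hsq z) (φ y) with hkdef
      have hk0 : φ k = 0 := by
        rw [hkdef, map_sub, phi_psi φ (hsq z) hφz, sub_self]
      have hstep := step hH (p ^ 2) φ k hk0 (hsq k) hx
      have hφx : φ x = (((p : ℕ) : ℤ) : ZMod (p ^ 2)) := by
        rw [← hz, map_nsmul, hφz]
        push_cast
        rw [nsmul_eq_mul, mul_one]
      rw [hφx, psi_intCast] at hstep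
      -- hstep : (p : ℤ) • k ∈ H
      obtain ⟨m, hm⟩ := ZMod.intCast_surjective (φ y)
      have h1 : ((p : ℕ) : ℤ) • psi (p ^ 2) z (hsq z) (φ y) ∈ H := by
        rw [← hm, psi_intCast, smul_comm]
        have hzx : ((p : ℕ) : ℤ) • z = x := by rw [natCast_zsmul]; exact hz
        rw [hzx]
        exact H.zsmul_mem hx m
      have hfx : f x = ((p : ℕ) : ℤ) • psi (p ^ 2) z (hsq z) (φ y) + ((p : ℕ) : ℤ) • k := by
        have hfp : f x = ((p : ℕ) : ℤ) • y := by
          rw [← hz, map_nsmul, natCast_zsmul]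
        rw [hfp, hkdef, smul_sub]
        abel
      rw [hfx]
      exact H.add_mem h1 hstep
    · -- x not divisible by p, order p
      obtain ⟨φ, hφx⟩ := exists_phi_p p hp hx0 hdiv
      refine core hH p φ f hx hφx ?_ ?_
      · rw [natCast_zsmul]; exact hpx
      · rw [← map_zsmul, natCast_zsmul, hpx, map_zero]
  · -- x of order p²
    obtain ⟨φ, hφx⟩ := exists_phi_sq p hp hG hpx
    exact core hH (p ^ 2) φ f hx hφx (hsq x) (hsq (f x))
end

section
/- A nonzero bounded abelian p-group G is not a weakly IC-group; that is, G has no proper characteristic subgroup H with H ≅ G. -/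
/-- Every nonzero element of `ZMod (p^(k+1))` factors as `p^s * u` with `s ≤ k` and `u` a unit. -/
lemma stmt7_aux_factor {p k : ℕ} (hp : p.Prime) {r : ZMod (p ^ (k + 1))} (hr : r ≠ 0) :
    ∃ s : ℕ, s ≤ k ∧ ∃ u : (ZMod (p ^ (k + 1)))ˣ,
      r = (p : ZMod (p ^ (k + 1))) ^ s * (u : ZMod (p ^ (k + 1))) := by
  haveI : NeZero (p ^ (k + 1)) := ⟨pow_ne_zero _ hp.ne_zero⟩
  have hv : r.val ≠ 0 := by
    intro h
    apply hr
    rw [← ZMod.natCast_zmod_val r, h, Nat.cast_zero]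
  set s := (r.val).factorization p with hs
  set m := r.val / p ^ s with hm
  have hsm : p ^ s * m = r.val := Nat.ordProj_mul_ordCompl_eq_self r.val p
  have hpm : ¬ p ∣ m := Nat.not_dvd_ordCompl hp hv
  have hsk : s ≤ k := by
    have h1 : p ^ s ≤ r.val := Nat.le_of_dvd (Nat.pos_of_ne_zero hv) (Nat.ordProj_dvd _ _)
    have h2 : r.val < p ^ (k + 1) := ZMod.val_lt r
    have h3 : p ^ s < p ^ (k + 1) := lt_of_le_of_lt h1 h2
    have := (Nat.pow_lt_pow_iff_right hp.one_lt).mp h3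
    omega
  have hmu : IsUnit ((m : ℕ) : ZMod (p ^ (k + 1))) := by
    rw [ZMod.isUnit_iff_coprime]
    exact ((hp.coprime_iff_not_dvd.mpr hpm).symm).pow_right _
  refine ⟨s, hsk, hmu.unit, ?_⟩
  rw [IsUnit.unit_spec, ← ZMod.natCast_zmod_val r, ← hsm]
  push_cast
  ring

/-- `ZMod (p^(k+1))` is self-injective (Baer's criterion). -/
lemma stmt7_aux_baer (p k : ℕ) (hp : p.Prime) :
    Module.Baer (ZMod (p ^ (k + 1))) (ZMod (p ^ (k + 1))) := by
  haveI : NeZero (p ^ (k + 1)) := ⟨pow_ne_zero _ hp.ne_zero⟩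
  haveI : IsPrincipalIdealRing (ZMod (p ^ (k + 1))) :=
    IsPrincipalIdealRing.of_surjective (Int.castRingHom (ZMod (p ^ (k + 1))))
      ZMod.intCast_surjective
  intro I g
  obtain ⟨a, rfl⟩ := (IsPrincipalIdealRing.principal I).principal
  by_cases ha : a = 0
  · refine ⟨0, fun x mem => ?_⟩
    subst ha
    obtain ⟨t, rfl⟩ := Submodule.mem_span_singleton.mp mem
    have : (⟨t • 0, mem⟩ : Ideal.span {(0 : ZMod (p ^ (k + 1)))}) = 0 := by
      ext; simp
    rw [this, map_zero, LinearMap.zero_apply]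
  · obtain ⟨s, hsk, u, hau⟩ := stmt7_aux_factor hp ha
    have haI : a ∈ Ideal.span {a} := Ideal.mem_span_singleton_self a
    set b : ZMod (p ^ (k + 1)) := g ⟨a, haI⟩ with hb
    -- b is killed by p^(k+1-s)
    have hkill : (p : ZMod (p ^ (k + 1))) ^ (k + 1 - s) * b = 0 := by
      have h0 : (p : ZMod (p ^ (k + 1))) ^ (k + 1 - s) * a = 0 := by
        rw [hau, ← mul_assoc, ← pow_add, show k + 1 - s + s = k + 1 by omega]
        have hz : ((p : ZMod (p ^ (k + 1)))) ^ (k + 1) = 0 := by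
          rw [← Nat.cast_pow, ZMod.natCast_self]
        rw [hz, zero_mul]
      have hsm0 : ((p : ZMod (p ^ (k + 1))) ^ (k + 1 - s)) • (⟨a, haI⟩ :
          Ideal.span {a}) = 0 := by
        ext
        simpa [smul_eq_mul] using h0
      calc (p : ZMod (p ^ (k + 1))) ^ (k + 1 - s) * b
          = ((p : ZMod (p ^ (k + 1))) ^ (k + 1 - s)) • b := by rw [smul_eq_mul]
        _ = g (((p : ZMod (p ^ (k + 1))) ^ (k + 1 - s)) • ⟨a, haI⟩) := (map_smul g _ _).symm
        _ = 0 := by rw [hsm0, map_zero]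
    -- hence b is divisible by p^s
    have hdvd : p ^ s ∣ b.val := by
      have h1 : ((p ^ (k + 1 - s) * b.val : ℕ) : ZMod (p ^ (k + 1))) = 0 := by
        push_cast
        rw [ZMod.natCast_zmod_val]
        exact hkill
      have h2 : p ^ (k + 1) ∣ p ^ (k + 1 - s) * b.val :=
        (ZMod.natCast_eq_zero_iff _ _).mp h1
      have h3 : p ^ (k + 1 - s) * p ^ s ∣ p ^ (k + 1 - s) * b.val := by
        rwa [← pow_add, show k + 1 - s + s = k + 1 by omega]
      exact (mul_dvd_mul_iff_left (pow_ne_zero (k + 1 - s) hp.ne_zero)).mp h3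
    obtain ⟨c₀, hc₀⟩ := hdvd
    have hbc : b = (p : ZMod (p ^ (k + 1))) ^ s * (c₀ : ZMod (p ^ (k + 1))) := by
      rw [← ZMod.natCast_zmod_val b, hc₀]
      push_cast
      ring
    refine ⟨LinearMap.toSpanSingleton _ _
      ((↑u⁻¹ : ZMod (p ^ (k + 1))) * (c₀ : ZMod (p ^ (k + 1)))), fun x mem => ?_⟩
    obtain ⟨r, rfl⟩ := Ideal.mem_span_singleton'.mp mem
    have hsub : (⟨r * a, mem⟩ : Ideal.span {a}) = r • ⟨a, haI⟩ := by
      ext; simp [smul_eq_mul]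
    rw [hsub, map_smul, ← hb, smul_eq_mul]
    rw [LinearMap.toSpanSingleton_apply, smul_eq_mul, hau, hbc]
    have hu1 : (u : ZMod (p ^ (k + 1))) * (↑u⁻¹ : ZMod (p ^ (k + 1))) = 1 := u.mul_inv
    calc r * ((p : ZMod (p ^ (k + 1))) ^ s * ↑u) * (↑u⁻¹ * ↑c₀)
        = r * ((p : ZMod (p ^ (k + 1))) ^ s * ↑c₀) * (↑u * ↑u⁻¹) := by ring
      _ = r * ((p : ZMod (p ^ (k + 1))) ^ s * ↑c₀) := by rw [hu1, mul_one]

/-- In `ZMod (p^(k+1))`, if `c` is not a unit then `1 + c` is a unit. -/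
lemma stmt7_aux_unit {p k : ℕ} (hp : p.Prime) {c : ZMod (p ^ (k + 1))} (hc : ¬ IsUnit c) :
    IsUnit (1 + c) := by
  haveI : NeZero (p ^ (k + 1)) := ⟨pow_ne_zero _ hp.ne_zero⟩
  have key : ∀ z : ZMod (p ^ (k + 1)), ¬ IsUnit z → p ∣ z.val := by
    intro z hz
    by_contra hpz
    apply hz
    rw [← ZMod.natCast_zmod_val z, ZMod.isUnit_iff_coprime]
    exact ((hp.coprime_iff_not_dvd.mpr hpz).symm).pow_right _
  by_contra h1
  have hpc : p ∣ c.val := key c hc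
  have hp1c : p ∣ (1 + c).val := key _ h1
  have hn2 : 1 < p ^ (k + 1) := Nat.one_lt_pow (Nat.succ_ne_zero k) hp.one_lt
  haveI : Fact (1 < p ^ (k + 1)) := ⟨hn2⟩
  have hval : (1 + c).val = (1 + c.val) % p ^ (k + 1) := by
    rw [ZMod.val_add, ZMod.val_one]
  rw [hval, Nat.dvd_mod_iff (dvd_pow_self p (Nat.succ_ne_zero k))] at hp1c
  have hone : p ∣ 1 := (Nat.dvd_add_right hpc).mp (by rwa [add_comm] at hp1c)
  exact hp.one_lt.ne' (Nat.dvd_one.mp hone)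


/-- Main step, abstractly: if `G` is a module over `R = ZMod (p^(k+1))` and `H` is a
characteristic subgroup containing an element `h` with `p^k • h ≠ 0`, then `H = ⊤`. -/
lemma stmt7_aux_main {p k : ℕ} (hp : p.Prime) {G : Type*} [AddCommGroup G]
    [Module (ZMod (p ^ (k + 1))) G] (H : AddSubgroup G)
    (hchar : ∀ φ : G ≃+ G, ∀ x ∈ H, φ x ∈ H) {h : G} (hh_mem : h ∈ H)
    (hh : p ^ k • h ≠ 0) : ∀ x : G, x ∈ H := by
  haveI : NeZero (p ^ (k + 1)) := ⟨pow_ne_zero _ hp.ne_zero⟩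
  have hcast : ∀ (m : ℕ) (x : G), ((m : ZMod (p ^ (k + 1)))) • x = m • x := fun m x =>
    Nat.cast_smul_eq_nsmul (ZMod (p ^ (k + 1))) m x
  -- the span map r ↦ r • h is injective
  have hinj : Function.Injective (LinearMap.toSpanSingleton (ZMod (p ^ (k + 1))) G h) := by
    rw [injective_iff_map_eq_zero]
    intro r hr
    by_contra hr0
    obtain ⟨s, hsk, u, rfl⟩ := stmt7_aux_factor hp hr0
    rw [LinearMap.toSpanSingleton_apply] at hr
    have hps : ((p : ZMod (p ^ (k + 1))) ^ s) • h = 0 := by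
      calc ((p : ZMod (p ^ (k + 1))) ^ s) • h
          = ((↑u⁻¹ : ZMod (p ^ (k + 1))) * ((p : ZMod (p ^ (k + 1))) ^ s * ↑u)) • h := by
            rw [show (↑u⁻¹ : ZMod (p ^ (k + 1))) * ((p : ZMod (p ^ (k + 1))) ^ s * ↑u)
                = ((p : ZMod (p ^ (k + 1))) ^ s) * ((↑u⁻¹ : ZMod (p ^ (k + 1))) * ↑u) by ring,
              u.inv_mul, mul_one]
        _ = (↑u⁻¹ : ZMod (p ^ (k + 1))) • (((p : ZMod (p ^ (k + 1))) ^ s * ↑u) • h) := by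
            rw [mul_smul]
        _ = (↑u⁻¹ : ZMod (p ^ (k + 1))) • (0 : G) := by rw [hr]
        _ = 0 := smul_zero _
    apply hh
    have hk0 : (p : ZMod (p ^ (k + 1))) ^ k • h = 0 := by
      rw [show (p : ZMod (p ^ (k + 1))) ^ k
          = (p : ZMod (p ^ (k + 1))) ^ (k - s) * (p : ZMod (p ^ (k + 1))) ^ s by
        rw [← pow_add, show k - s + s = k by omega], mul_smul, hps, smul_zero]
    rw [← hcast (p ^ k) h]
    push_cast
    exact hk0
  -- extend r ↦ r to a functional π : G → R with π h = 1
  obtain ⟨π, hπ⟩ := (stmt7_aux_baer p k hp).extension_property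
    (LinearMap.toSpanSingleton (ZMod (p ^ (k + 1))) G h) hinj LinearMap.id
  have hπh : π h = 1 := by
    have := LinearMap.congr_fun hπ 1
    simpa using this
  -- key step: automorphisms h ↦ h + y exist whenever 1 + π y is a unit
  have key : ∀ y : G, IsUnit ((1 : ZMod (p ^ (k + 1))) + π y) → h + y ∈ H := by
    intro y hy
    obtain ⟨u, hu⟩ := hy
    set c : ZMod (p ^ (k + 1)) := π y with hc
    set d : ZMod (p ^ (k + 1)) := -((↑u⁻¹ : ZMod (p ^ (k + 1)))) with hd
    have hd1 : d * (1 + c) = -1 := by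
      rw [hd, ← hu, neg_mul, u.inv_mul]
    have hBA : ∀ g : G, (g + π g • y) + (d * π (g + π g • y)) • y = g := by
      intro g
      have h1 : π (g + π g • y) = π g * (1 + c) := by
        rw [map_add, map_smul, smul_eq_mul, ← hc]; ring
      rw [h1, show d * (π g * (1 + c)) = (d * (1 + c)) * π g by ring, hd1]
      rw [show (-1 : ZMod (p ^ (k + 1))) * π g = -(π g) by ring, neg_smul]
      abel
    have hAB : ∀ g : G, (g + (d * π g) • y) + π (g + (d * π g) • y) • y = g := by
      intro g
      have h1 : π (g + (d * π g) • y) = π g + d * π g * c := by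
        rw [map_add, map_smul, smul_eq_mul, ← hc]
      rw [h1, add_assoc, ← add_smul]
      rw [show d * π g + (π g + d * π g * c) = (1 + d * (1 + c)) * π g by ring, hd1]
      simp
    let α : G ≃+ G :=
      { toFun := fun g => g + π g • y
        invFun := fun g => g + (d * π g) • y
        left_inv := fun g => hBA g
        right_inv := fun g => hAB g
        map_add' := fun a b => by
          show (a + b) + π (a + b) • y = (a + π a • y) + (b + π b • y)
          rw [map_add, add_smul]; abel }
    have hαh : α h = h + y := by
      show h + π h • y = h + y
      rw [hπh, one_smul]
    have := hchar α h hh_mem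
    rwa [hαh] at this
  -- every element of G is in H
  intro x
  by_cases hx : IsUnit (π x)
  · have h1 : IsUnit ((1 : ZMod (p ^ (k + 1))) + π (x - h)) := by
      rwa [map_sub, hπh, add_sub_cancel]
    have := key (x - h) h1
    rwa [add_sub_cancel] at this
  · have h1 : IsUnit ((1 : ZMod (p ^ (k + 1))) + π x) := stmt7_aux_unit hp hx
    have h2 : h + x ∈ H := key x h1
    have h3 : (h + x) - h ∈ H := AddSubgroup.sub_mem H h2 hh_mem
    rwa [add_sub_cancel_left] at h3

/-- A nonzero bounded abelian `p`-group (`p^(k+1)G = 0`, `p^k G ≠ 0`) has no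
proper characteristic subgroup isomorphic to itself, i.e. it is not a weakly IC-group. -/
theorem stmt7 {G : Type*} [AddCommGroup G] [Nontrivial G] (p k : ℕ) (hp : p.Prime)
    (hbound : ∀ g : G, p ^ (k + 1) • g = 0)
    (hne : ∃ g : G, p ^ k • g ≠ 0) :
    ¬ ∃ H : AddSubgroup G,
        (∀ φ : G ≃+ G, ∀ x ∈ H, φ x ∈ H) ∧ H ≠ ⊤ ∧ Nonempty (H ≃+ G) := by
  rintro ⟨H, hchar, htop, ⟨ψ⟩⟩
  haveI : NeZero (p ^ (k + 1)) := ⟨pow_ne_zero _ hp.ne_zero⟩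
  letI : Module (ZMod (p ^ (k + 1))) G := AddCommGroup.zmodModule hbound
  obtain ⟨g0, hg0⟩ := hne
  have hh_mem : (ψ.symm g0 : G) ∈ H := (ψ.symm g0).2
  have hh : p ^ k • (ψ.symm g0 : G) ≠ 0 := by
    intro h0
    apply hg0
    have hH0 : (p ^ k • ψ.symm g0 : H) = 0 := by
      apply Subtype.ext
      simpa using h0
    have := congrArg ψ hH0
    simpa using this
  exact htop ((AddSubgroup.eq_top_iff' H).mpr (stmt7_aux_main hp H hchar hh_mem hh))
end

section
/- A non-reduced torsion-free abelian group G = R ⊕ D, with D the divisible part and R the reduced part, is a weakly IC-group if and only if R is a weakly IC-group. Moreover, any characteristic subgroup H of G with H ≅ G satisfies H = (H ∩ R) ⊕ D. -/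
/-!
As `D` is divisible and `R` is reduced, every homomorphism `D → R` vanishes. Hence any isomorphism
`A × D ≃ B × D` with `A, B` receiving no maps from `D` sends `D` into `D` and induces an isomorphism
`A ≃ B` on the first factors. If `H ≅ R × D` is characteristic, the copy of `D` inside `H` lies in
`0 × D`, and since `D` is a `ℚ`-vector space its automorphisms act transitively on nonzero vectors,
so `0 × D ≤ H` and `H = K × D` with `K = H ∩ R`. Then `K` is characteristic and proper in `R`, and
cancelling `D` in `K × D ≅ R × D` gives `K ≅ R`; conversely `K ↦ K × D`.
-/

theorem exists_linearEquiv_apply_eq {K V : Type*} [DivisionRing K] [AddCommGroup V] [Module K V]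
    {a b : V} (ha : a ≠ 0) (hb : b ≠ 0) : ∃ g : V ≃ₗ[K] V, g a = b := by
  obtain ⟨g, hg⟩ := Submodule.exists_linearEquiv_restrict_eq
    ((LinearEquiv.toSpanNonzeroSingleton K V a ha).symm ≪≫ₗ
      LinearEquiv.toSpanNonzeroSingleton K V b hb)
  refine ⟨g, ?_⟩
  have := hg ⟨a, Submodule.mem_span_singleton_self a⟩
  rw [LinearEquiv.trans_apply, ← LinearEquiv.toSpanNonzeroSingleton_one K V a ha,
    LinearEquiv.symm_apply_apply] at this
  simpa using this.symm

theorem isLocalizedModule_id_of_torsionFree_of_divisible {D : Type*} [AddCommGroup D]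
    (htf : ∀ (n : ℤ) (x : D), n • x = 0 → n = 0 ∨ x = 0)
    (hdiv : ∀ n : ℤ, n ≠ 0 → ∀ d : D, ∃ e : D, n • e = d) :
    IsLocalizedModule (nonZeroDivisors ℤ) (LinearMap.id : D →ₗ[ℤ] D) where
  map_units n := by
    have hn : (n : ℤ) ≠ 0 := nonZeroDivisors.coe_ne_zero n
    refine (Module.End.isUnit_iff _).mpr ⟨fun x y hxy => ?_, fun d => ?_⟩
    · simp only [Module.algebraMap_end_apply] at hxy
      have := htf n (x - y) (by rw [smul_sub, hxy, sub_self])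
      exact sub_eq_zero.mp (this.resolve_left hn)
    · simpa only [Module.algebraMap_end_apply] using hdiv n hn d
  surj d := ⟨(d, 1), one_smul _ _⟩
  exists_of_eq h := ⟨1, congrArg _ h⟩

theorem exists_addEquiv_apply_eq_of_torsionFree_of_divisible {D : Type*} [AddCommGroup D]
    (htf : ∀ (n : ℤ) (x : D), n • x = 0 → n = 0 ∨ x = 0)
    (hdiv : ∀ n : ℤ, n ≠ 0 → ∀ d : D, ∃ e : D, n • e = d)
    {a b : D} (ha : a ≠ 0) (hb : b ≠ 0) : ∃ ψ : D ≃+ D, ψ a = b := by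
  have := isLocalizedModule_id_of_torsionFree_of_divisible htf hdiv
  -- `D` is its own localization at `ℤ⁰`, hence a `ℚ`-vector space
  let _ : Module ℚ D := IsLocalizedModule.module (nonZeroDivisors ℤ) (LinearMap.id : D →ₗ[ℤ] D)
  obtain ⟨g, hg⟩ := exists_linearEquiv_apply_eq (K := ℚ) ha hb
  exact ⟨g.toAddEquiv, hg⟩

theorem AddMonoidHom.eq_zero_of_divisible_of_reduced {D R : Type*} [AddCommGroup D]
    [AddCommGroup R] (hdiv : ∀ n : ℤ, n ≠ 0 → ∀ d : D, ∃ e : D, n • e = d)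
    (hred : ∀ S : AddSubgroup R, (∀ n : ℤ, n ≠ 0 → ∀ s ∈ S, ∃ t ∈ S, n • t = s) → S = ⊥)
    (f : D →+ R) : f = 0 := by
  have hrange : f.range = ⊥ := hred _ fun n hn _ ⟨d, hd⟩ => by
    obtain ⟨e, rfl⟩ := hdiv n hn d
    exact ⟨f e, ⟨e, rfl⟩, by rw [← hd, map_zsmul]⟩
  ext d
  simpa [hrange] using f.mem_range.mpr ⟨d, rfl⟩

section Prod

variable {A B D : Type*} [AddCommGroup A] [AddCommGroup B] [AddCommGroup D]

theorem fst_map_eq_fst_map_inl (hB : ∀ f : D →+ B, f = 0) (φ : A × D →+ B × D) (x : A × D) :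
    (φ x).1 = (φ (x.1, 0)).1 := by
  have h : (φ (0, x.2)).1 = 0 :=
    DFunLike.congr_fun (hB ((AddMonoidHom.fst B D).comp (φ.comp (AddMonoidHom.inr A D)))) x.2
  calc (φ x).1 = (φ ((x.1, 0) + (0, x.2))).1 := by simp
    _ = (φ (x.1, 0)).1 := by rw [map_add, Prod.fst_add, h, add_zero]

theorem exists_addEquiv_fst_apply_eq (hA : ∀ f : D →+ A, f = 0) (hB : ∀ f : D →+ B, f = 0)
    (ε : A × D ≃+ B × D) : ∃ α : A ≃+ B, ∀ x, (ε x).1 = α x.1 := by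
  have hε := fst_map_eq_fst_map_inl hB ε.toAddMonoidHom
  have hε' := fst_map_eq_fst_map_inl hA ε.symm.toAddMonoidHom
  refine ⟨{ toFun := fun a => (ε (a, 0)).1
            invFun := fun b => (ε.symm (b, 0)).1
            left_inv := fun a => ?_
            right_inv := fun b => ?_
            map_add' := fun a a' => ?_ }, fun x => hε x⟩
  · simpa using (hε' (ε (a, 0))).symm
  · simpa using (hε (ε.symm (b, 0))).symm
  · rw [← Prod.fst_add, ← map_add, Prod.mk_add_mk, add_zero]

end Prod

namespace AddSubgroup

variable {R D : Type*} [AddCommGroup R] [AddCommGroup D]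

theorem eq_comap_inl_prod_top {H : AddSubgroup (R × D)} (hH : (AddMonoidHom.inr R D).range ≤ H) :
    H = (H.comap (AddMonoidHom.inl R D)).prod ⊤ := by
  ext x
  have hx2 : ((0 : R), x.2) ∈ H := hH ⟨x.2, rfl⟩
  constructor
  · intro hx
    refine ⟨?_, trivial⟩
    show (x.1, (0 : D)) ∈ H
    convert H.sub_mem hx hx2 using 1
    ext <;> simp
  · rintro ⟨hx1, -⟩
    simpa using H.add_mem hx1 hx2

theorem eq_inf_range_inl_sup_range_inr {H : AddSubgroup (R × D)}
    (hH : (AddMonoidHom.inr R D).range ≤ H) :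
    H = H ⊓ (AddMonoidHom.inl R D).range ⊔ (AddMonoidHom.inr R D).range := by
  refine le_antisymm (fun x hx => ?_) (sup_le inf_le_left hH)
  rw [eq_comap_inl_prod_top hH] at hx
  rw [← Prod.fst_add_snd x]
  exact add_mem (mem_sup_left ⟨hx.1, x.1, rfl⟩) (mem_sup_right ⟨x.2, rfl⟩)

theorem range_inr_le_of_characteristic (hB : ∀ f : D →+ R, f = 0)
    (htf : ∀ (n : ℤ) (x : D), n • x = 0 → n = 0 ∨ x = 0)
    (hdiv : ∀ n : ℤ, n ≠ 0 → ∀ d : D, ∃ e : D, n • e = d)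
    {H : AddSubgroup (R × D)} (hH : ∀ φ : (R × D) ≃+ (R × D), ∀ x ∈ H, φ x ∈ H)
    (e : H ≃+ (R × D)) : (AddMonoidHom.inr R D).range ≤ H := by
  rintro _ ⟨d, rfl⟩
  rcases eq_or_ne d 0 with rfl | hd
  · exact H.zero_mem
  set h : R × D := ↑(e.symm (0, d))
  have hmem : h ∈ H := (e.symm (0, d)).property
  have h1 : h.1 = 0 := DFunLike.congr_fun
    (hB ((AddMonoidHom.fst R D).comp (H.subtype.comp (e.symm.toAddMonoidHom.comp
      (AddMonoidHom.inr R D))))) d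
  have h2 : h.2 ≠ 0 := fun h2 => hd <| by
    have : e.symm (0, d) = 0 := Subtype.ext (Prod.ext h1 h2)
    simpa using this
  clear_value h
  obtain ⟨r, d₀⟩ := h
  obtain rfl : r = 0 := h1
  obtain ⟨ψ, hψ⟩ := exists_addEquiv_apply_eq_of_torsionFree_of_divisible htf hdiv h2 hd
  have hφ : (AddEquiv.refl R).prodCongr ψ (0, d₀) = (0, d) := Prod.ext rfl hψ
  rw [AddMonoidHom.inr_apply, ← hφ]
  exact hH _ _ hmem

end AddSubgroup

def IsWeaklyIC (G : Type*) [AddCommGroup G] : Prop :=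
  ∃ H : AddSubgroup G, (∀ φ : G ≃+ G, ∀ x ∈ H, φ x ∈ H) ∧ H ≠ ⊤ ∧ Nonempty (H ≃+ G)

namespace IsWeaklyIC

variable {R D : Type*} [AddCommGroup R] [AddCommGroup D]

theorem of_prod (hB : ∀ f : D →+ R, f = 0)
    (htf : ∀ (n : ℤ) (x : D), n • x = 0 → n = 0 ∨ x = 0)
    (hdiv : ∀ n : ℤ, n ≠ 0 → ∀ d : D, ∃ e : D, n • e = d) (h : IsWeaklyIC (R × D)) :
    IsWeaklyIC R := by
  obtain ⟨H, hH, hH_ne_top, ⟨e⟩⟩ := h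
  set K := H.comap (AddMonoidHom.inl R D)
  have hHK : H = K.prod ⊤ :=
    AddSubgroup.eq_comap_inl_prod_top (AddSubgroup.range_inr_le_of_characteristic hB htf hdiv hH e)
  have hBK : ∀ f : D →+ K, f = 0 := fun f =>
    AddMonoidHom.ext fun d => Subtype.ext (DFunLike.congr_fun (hB (K.subtype.comp f)) d)
  have ε : K × D ≃+ R × D :=
    ((AddEquiv.refl K).prodCongr AddSubgroup.topEquiv.symm).trans
      ((K.prodEquiv ⊤).symm.trans ((AddEquiv.addSubgroupCongr hHK.symm).trans e))
  obtain ⟨α, -⟩ := exists_addEquiv_fst_apply_eq hBK hB ε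
  refine ⟨K, fun β r hr => hH (β.prodCongr (AddEquiv.refl D)) (r, 0) hr, fun hK => ?_, ⟨α⟩⟩
  exact hH_ne_top (by rw [hHK, hK, AddSubgroup.top_prod_top])

theorem prod (hB : ∀ f : D →+ R, f = 0) (h : IsWeaklyIC R) : IsWeaklyIC (R × D) := by
  obtain ⟨K, hK, hK_ne_top, ⟨e⟩⟩ := h
  refine ⟨K.prod ⊤, fun φ x hx => ?_, fun htop => hK_ne_top ?_,
    ⟨(K.prodEquiv ⊤).trans (e.prodCongr AddSubgroup.topEquiv)⟩⟩
  · obtain ⟨α, hα⟩ := exists_addEquiv_fst_apply_eq hB hB φ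
    exact ⟨(hα x).symm ▸ hK α _ hx.1, trivial⟩
  · refine AddSubgroup.eq_top_iff' K |>.mpr fun r => ?_
    have hr : (r, (0 : D)) ∈ K.prod ⊤ := htop ▸ AddSubgroup.mem_top _
    exact hr.1

end IsWeaklyIC

theorem stmt9_general {R D : Type*} [AddCommGroup R] [AddCommGroup D]
    (htfD : ∀ (n : ℤ) (x : D), n • x = 0 → n = 0 ∨ x = 0)
    (hDdiv : ∀ n : ℤ, n ≠ 0 → ∀ d : D, ∃ e : D, n • e = d)
    (hRred : ∀ S : AddSubgroup R,
      (∀ n : ℤ, n ≠ 0 → ∀ s ∈ S, ∃ t ∈ S, n • t = s) → S = ⊥) :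
    ((∃ H : AddSubgroup (R × D),
        (∀ φ : (R × D) ≃+ (R × D), ∀ x ∈ H, φ x ∈ H) ∧ H ≠ ⊤ ∧ Nonempty (H ≃+ (R × D))) ↔
      (∃ K : AddSubgroup R,
        (∀ α : R ≃+ R, ∀ x ∈ K, α x ∈ K) ∧ K ≠ ⊤ ∧ Nonempty (K ≃+ R))) ∧
    (∀ H : AddSubgroup (R × D),
      (∀ φ : (R × D) ≃+ (R × D), ∀ x ∈ H, φ x ∈ H) → Nonempty (H ≃+ (R × D)) →
      H = (H ⊓ (AddMonoidHom.inl R D).range) ⊔ (AddMonoidHom.inr R D).range) := by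
  have hB : ∀ f : D →+ R, f = 0 := AddMonoidHom.eq_zero_of_divisible_of_reduced hDdiv hRred
  refine ⟨⟨IsWeaklyIC.of_prod hB htfD hDdiv, IsWeaklyIC.prod hB⟩, fun H hH ⟨e⟩ => ?_⟩
  exact AddSubgroup.eq_inf_range_inl_sup_range_inr
    (AddSubgroup.range_inr_le_of_characteristic hB htfD hDdiv hH e)

/-- For a non-reduced torsion-free abelian group `G = R ⊕ D` (with `D ≠ 0`
divisible and `R` reduced), `G` is a weakly IC-group iff `R` is; moreover every
characteristic subgroup `H` of `G` with `H ≅ G` satisfies `H = (H ∩ R) ⊕ D`. -/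
theorem stmt9 {R D : Type*} [AddCommGroup R] [AddCommGroup D] [Nontrivial D]
    (htfR : ∀ (n : ℤ) (x : R), n • x = 0 → n = 0 ∨ x = 0)
    (htfD : ∀ (n : ℤ) (x : D), n • x = 0 → n = 0 ∨ x = 0)
    (hDdiv : ∀ n : ℤ, n ≠ 0 → ∀ d : D, ∃ e : D, n • e = d)
    (hRred : ∀ S : AddSubgroup R,
      (∀ n : ℤ, n ≠ 0 → ∀ s ∈ S, ∃ t ∈ S, n • t = s) → S = ⊥) :
    ((∃ H : AddSubgroup (R × D),
        (∀ φ : (R × D) ≃+ (R × D), ∀ x ∈ H, φ x ∈ H) ∧ H ≠ ⊤ ∧ Nonempty (H ≃+ (R × D))) ↔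
      (∃ K : AddSubgroup R,
        (∀ α : R ≃+ R, ∀ x ∈ K, α x ∈ K) ∧ K ≠ ⊤ ∧ Nonempty (K ≃+ R))) ∧
    (∀ H : AddSubgroup (R × D),
      (∀ φ : (R × D) ≃+ (R × D), ∀ x ∈ H, φ x ∈ H) → Nonempty (H ≃+ (R × D)) →
      H = (H ⊓ (AddMonoidHom.inl R D).range) ⊔ (AddMonoidHom.inr R D).range) :=
  stmt9_general htfD hDdiv hRred
end

section
/- Let G be a homogeneous transitive torsion-free abelian group. Then every characteristic subgroup of G is fully invariant. -/
/-!
Given `f` and `x ≠ 0` with `y = f x ≠ 0`, homogeneity gives coprime `k, m` (after cancelling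
the gcd, which torsion-freeness allows) with `χ(k x) = χ(m y)`. Then `χ(k x) = χ(y)`: if `d`
divides `k x`, it divides both `f (k x) = k y` and `m y`, hence `y` by Bézout; conversely
`d ∣ y` gives `d ∣ m y`. Transitivity yields an automorphism `φ` with `φ (k x) = y`, so
`y ∈ H` as soon as `x ∈ H`.
-/

/-- The characteristic (height sequence) of an element: `chi x p n` says `x` is divisible
by `p^n`. -/
def chi {G : Type*} [AddCommGroup G] (x : G) : ℕ → ℕ → Prop :=
  fun p n => ∃ y : G, (p : ℤ) ^ n • y = x

section

variable {G G' : Type*} [AddCommGroup G] [AddCommGroup G']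

theorem AddSubgroup.mem_of_nsmul_mem_of_coprime (H : AddSubgroup G) {k m : ℕ}
    (hkm : k.Coprime m) {y : G} (hk : k • y ∈ H) (hm : m • y ∈ H) : y ∈ H := by
  obtain ⟨u, v, huv⟩ := Nat.isCoprime_iff_coprime.mpr hkm
  have hy : y = u • (k • y) + v • (m • y) := by
    rw [← natCast_zsmul, ← natCast_zsmul, smul_smul, smul_smul, ← add_smul, huv, one_smul]
  rw [hy]
  exact add_mem (H.zsmul_mem hk u) (H.zsmul_mem hm v)

def nsmulRange (d : ℕ) : AddSubgroup G := (nsmulAddMonoidHom d).range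

theorem mem_nsmulRange {d : ℕ} {x : G} : x ∈ nsmulRange d ↔ ∃ z, d • z = x := Iff.rfl

theorem mem_nsmulRange_zero {x : G} : x ∈ nsmulRange 0 ↔ x = 0 := by
  simp [mem_nsmulRange, eq_comm]

theorem map_mem_nsmulRange (f : G →+ G') {d : ℕ} {x : G} (hx : x ∈ nsmulRange d) :
    f x ∈ nsmulRange d := by
  obtain ⟨z, rfl⟩ := hx
  exact ⟨f z, (map_nsmul f d z).symm⟩

theorem nsmul_mem_nsmulRange_mul_iff [IsAddTorsionFree G] {g : ℕ} (hg : g ≠ 0) {d : ℕ}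
    {x : G} : g • x ∈ nsmulRange (d * g) ↔ x ∈ nsmulRange d := by
  simp only [mem_nsmulRange, mul_nsmul, nsmul_right_inj hg]

theorem chi_iff_mem_nsmulRange {x : G} {p n : ℕ} : chi x p n ↔ x ∈ nsmulRange (p ^ n) := by
  simp only [chi, mem_nsmulRange, ← natCast_zsmul, Nat.cast_pow]

theorem chi_eq_chi_iff {x y : G} :
    chi x = chi y ↔ ∀ d : ℕ, (x ∈ nsmulRange d ↔ y ∈ nsmulRange d) := by
  refine ⟨fun h d => ?_, fun h => ?_⟩
  · simpa only [chi_iff_mem_nsmulRange, pow_one] using (congrFun (congrFun h d) 1).to_iff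
  · funext p n
    exact propext (chi_iff_mem_nsmulRange.trans ((h _).trans chi_iff_mem_nsmulRange.symm))

theorem ne_zero_of_chi_eq {x y : G} (h : chi x = chi y) (hy : y ≠ 0) : x ≠ 0 := by
  rwa [Ne, ← mem_nsmulRange_zero, chi_eq_chi_iff.mp h 0, mem_nsmulRange_zero]

theorem chi_eq_chi_of_nsmul [IsAddTorsionFree G] {g : ℕ} (hg : g ≠ 0) {x y : G}
    (h : chi (g • x) = chi (g • y)) : chi x = chi y := by
  rw [chi_eq_chi_iff] at h ⊢
  intro d
  simpa only [nsmul_mem_nsmulRange_mul_iff hg] using h (d * g)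

theorem chi_nsmul_eq_chi_map_of_coprime (f : G →+ G) {k m : ℕ} (hkm : k.Coprime m) {x : G}
    (h : chi (k • x) = chi (m • f x)) : chi (k • x) = chi (f x) := by
  rw [chi_eq_chi_iff] at h ⊢
  refine fun d => ⟨fun hx => ?_, fun hy => (h d).mpr ((nsmulRange d).nsmul_mem hy m)⟩
  have hk : k • f x ∈ nsmulRange d := by
    simpa only [map_nsmul] using map_mem_nsmulRange f hx
  exact (nsmulRange d).mem_of_nsmul_mem_of_coprime hkm hk ((h d).mp hx)

theorem exists_chi_nsmul_eq_chi_map [IsAddTorsionFree G] (f : G →+ G) {k m : ℕ} (hk : 0 < k)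
    {x : G} (h : chi (k • x) = chi (m • f x)) : ∃ j : ℕ, chi (j • x) = chi (f x) := by
  obtain ⟨g, k', m', hg, hkm, rfl, rfl⟩ := Nat.exists_coprime' (Nat.gcd_pos_of_pos_left m hk)
  rw [mul_comm k', mul_comm m', mul_nsmul', mul_nsmul'] at h
  exact ⟨k', chi_nsmul_eq_chi_map_of_coprime f hkm (chi_eq_chi_of_nsmul hg.ne' h)⟩

end

/-- If `G` is a homogeneous transitive torsion-free abelian group, then
every characteristic subgroup of `G` is fully invariant. Homogeneity: any two nonzero
elements have equal types, i.e. suitable nonzero multiples have equal characteristics.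
Transitivity: elements with equal characteristics are conjugate under `Aut(G)`. -/
theorem stmt11 {G : Type*} [AddCommGroup G]
    (htf : ∀ (n : ℤ) (x : G), n • x = 0 → n = 0 ∨ x = 0)
    (hhom : ∀ x y : G, x ≠ 0 → y ≠ 0 →
      ∃ k m : ℕ, 0 < k ∧ 0 < m ∧ chi (k • x) = chi (m • y))
    (htrans : ∀ x y : G, x ≠ 0 → y ≠ 0 → chi x = chi y → ∃ φ : G ≃+ G, φ x = y)
    (H : AddSubgroup G)
    (hH : ∀ φ : G ≃+ G, ∀ x ∈ H, φ x ∈ H) :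
    ∀ f : G →+ G, ∀ x ∈ H, f x ∈ H := by
  have : Module.IsTorsionFree ℤ G := .of_smul_eq_zero htf
  have : IsAddTorsionFree G := .of_isTorsionFree ℤ G
  intro f x hx
  by_cases hfx : f x = 0
  · exact hfx ▸ H.zero_mem
  have hx0 : x ≠ 0 := by
    rintro rfl
    exact hfx (map_zero f)
  obtain ⟨k, m, hk, -, hkm⟩ := hhom x (f x) hx0 hfx
  obtain ⟨j, hj⟩ := exists_chi_nsmul_eq_chi_map f hk hkm
  obtain ⟨φ, hφ⟩ := htrans (j • x) (f x) (ne_zero_of_chi_eq hj hfx) hfx hj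
  exact hφ ▸ hH φ _ (H.nsmul_mem hx j)
end

section
/- Let B = ⊕_{k≥1} B_k where each B_k is a direct sum of cyclic groups of order p^k, let π_k : B → B_k be the projections, and let H be a characteristic subgroup of B with π_k(H) = p^{n_k}B_k for each k with π_k(H) ≠ 0. Then n_k ≤ n_{k+r} ≤ n_k + r for all k, r ≥ 1. -/
/-!
If `g` is an endomorphism of an abelian group with `g ∘ g = 0`, then `1 + g` is an automorphism,
so a characteristic subgroup is stable under `g`. Taking for `g` a map that reads one cyclic
coordinate of `B_m`, sends it by a homomorphism `ZMod (p ^ m) → ZMod (p ^ m')` to one coordinate of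
`B_{m'}` and kills everything else, `π_m(H) ∋ p^{n_m} e_i` yields `p^{n_m + s} e_j ∈ π_{m'}(H)`
whenever there is such a homomorphism with `1 ↦ p ^ s`, i.e. whenever `m' ≤ m + s`. Comparing
with `π_{m'}(H) = p^{n_{m'}} B_{m'}` gives `n_{m'} ≤ n_m + s` as long as `n_m + s < m'`. The
reduction `ZMod (p ^ (k + r)) → ZMod (p ^ k)` (`s = 0`) gives `n_k ≤ n_{k+r}`, multiplication by
`p ^ r` from `ZMod (p ^ k)` to `ZMod (p ^ (k + r))` gives `n_{k+r} ≤ n_k + r`.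
-/

/-- Multiplication by an integer as an additive group homomorphism. -/
def zsmulHom {A : Type*} [AddCommGroup A] (n : ℤ) : A →+ A where
  toFun x := n • x
  map_zero' := smul_zero n
  map_add' x y := smul_add n x y

@[simp]
lemma zsmulHom_apply {A : Type*} [AddCommGroup A] (n : ℤ) (x : A) : zsmulHom n x = n • x := rfl

section Characteristic

variable {G : Type*} [AddCommGroup G]

def AddMonoidHom.idAddEquivOfSqEqZero (g : G →+ G) (hg : ∀ x, g (g x) = 0) : G ≃+ G where
  toFun x := x + g x
  invFun x := x - g x
  left_inv x := by simp [hg]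
  right_inv x := by simp [hg]
  map_add' x y := by simp only [map_add]; abel

lemma AddSubgroup.apply_mem_of_sq_eq_zero {H : AddSubgroup G} (hH : ∀ φ : G ≃+ G, ∀ x ∈ H, φ x ∈ H)
    (g : G →+ G) (hg : ∀ x, g (g x) = 0) {x : G} (hx : x ∈ H) : g x ∈ H := by
  have h := H.sub_mem (hH (g.idAddEquivOfSqEqZero hg) x hx) hx
  simpa [AddMonoidHom.idAddEquivOfSqEqZero] using h

end Characteristic

lemma DFinsupp.apply_mem_map_evalAddMonoidHom_of_ne {κ : Type*} {M : κ → Type*}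
    [∀ k, AddCommGroup (M k)] {H : AddSubgroup (Π₀ k, M k)}
    (hH : ∀ φ : (Π₀ k, M k) ≃+ (Π₀ k, M k), ∀ x ∈ H, φ x ∈ H)
    {k l : κ} (hkl : k ≠ l) (f : M k →+ M l) {x : Π₀ k, M k} (hx : x ∈ H) :
    f (x k) ∈ H.map (DFinsupp.evalAddMonoidHom l) := by
  classical
  let g : (Π₀ k, M k) →+ (Π₀ k, M k) :=
    (DFinsupp.singleAddHom M l).comp (f.comp (DFinsupp.evalAddMonoidHom k))
  have hg : ∀ y, g y = DFinsupp.single l (f (y k)) := fun _ => rfl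
  have hgg : ∀ y, g (g y) = 0 := fun y => by
    rw [hg, hg, DFinsupp.single_eq_of_ne hkl, map_zero, DFinsupp.single_zero]
  refine ⟨g x, AddSubgroup.apply_mem_of_sq_eq_zero hH g hgg hx, ?_⟩
  rw [hg]
  exact DFinsupp.single_eq_same (β := M)

lemma ZMod.exists_addMonoidHom_one_eq {A : Type*} [AddCommGroup A] {n : ℕ} {y : A}
    (hy : n • y = 0) : ∃ f : ZMod n →+ A, f 1 = y :=
  ⟨ZMod.lift n ⟨zmultiplesHom A y, by simpa using hy⟩, by
    simpa using ZMod.lift_coe n ⟨zmultiplesHom A y, by simpa using hy⟩ 1⟩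

section PrimePower

variable {p m : ℕ}

lemma ZMod.natCast_self_pow_eq_zero_iff (hp : 1 < p) {a : ℕ} :
    (p : ZMod (p ^ m)) ^ a = 0 ↔ m ≤ a := by
  rw [← Nat.cast_pow, ZMod.natCast_eq_zero_iff, Nat.pow_dvd_pow_iff_le_right hp]

lemma ZMod.le_of_natCast_self_pow_dvd (hp : 1 < p) {a b : ℕ} (ha : a < m)
    (h : (p : ZMod (p ^ m)) ^ b ∣ (p : ZMod (p ^ m)) ^ a) : b ≤ a := by
  by_contra! hab
  obtain ⟨c, hc⟩ := h
  have : (p : ZMod (p ^ m)) ^ (m - 1) = 0 := calc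
    (p : ZMod (p ^ m)) ^ (m - 1) = (p : ZMod (p ^ m)) ^ a * p ^ (m - 1 - a) := by
      rw [← pow_add]; congr 1; omega
    _ = (p : ZMod (p ^ m)) ^ (b + (m - 1 - a)) * c := by rw [hc, pow_add]; ring
    _ = 0 := by rw [(ZMod.natCast_self_pow_eq_zero_iff hp).2 (by omega), zero_mul]
  exact absurd ((ZMod.natCast_self_pow_eq_zero_iff hp).1 this) (by omega)

variable {ι : Type*}

lemma Finsupp.single_natCast_self_pow_mem_map_zsmulHom (i : ι) (a : ℕ) :
    Finsupp.single i ((p : ZMod (p ^ m)) ^ a) ∈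
      AddSubgroup.map (zsmulHom ((p : ℤ) ^ a)) (⊤ : AddSubgroup (ι →₀ ZMod (p ^ m))) :=
  ⟨Finsupp.single i 1, trivial, by simp [Finsupp.smul_single, zsmul_eq_mul]⟩

lemma Finsupp.le_of_single_natCast_self_pow_mem_map_zsmulHom (hp : 1 < p) {a b : ℕ} (ha : a < m)
    {i : ι} (h : Finsupp.single i ((p : ZMod (p ^ m)) ^ a) ∈
      AddSubgroup.map (zsmulHom ((p : ℤ) ^ b)) (⊤ : AddSubgroup (ι →₀ ZMod (p ^ m)))) :
    b ≤ a := by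
  obtain ⟨z, -, hz⟩ := h
  have hzi : (p : ZMod (p ^ m)) ^ b * z i = (p : ZMod (p ^ m)) ^ a := by
    simpa [zsmul_eq_mul] using congrArg (· i) hz
  exact ZMod.le_of_natCast_self_pow_dvd hp ha ⟨z i, hzi.symm⟩

lemma Finsupp.nonempty_and_lt_of_map_zsmulHom_ne_bot (hp : 1 < p) {a : ℕ}
    (h : AddSubgroup.map (zsmulHom ((p : ℤ) ^ a)) (⊤ : AddSubgroup (ι →₀ ZMod (p ^ m))) ≠ ⊥) :
    Nonempty ι ∧ a < m := by
  obtain ⟨_, ⟨z, -, rfl⟩, hz⟩ := (AddSubgroup.bot_or_exists_ne_zero _).resolve_left h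
  obtain ⟨i, hi⟩ := Finsupp.ne_iff.1 hz
  have hpa : (p : ZMod (p ^ m)) ^ a ≠ 0 :=
    left_ne_zero_of_mul (by simpa [zsmul_eq_mul] using hi)
  exact ⟨⟨i⟩, lt_of_not_ge fun hma => hpa ((ZMod.natCast_self_pow_eq_zero_iff hp).2 hma)⟩

end PrimePower

lemma le_add_of_map_evalAddMonoidHom_eq_map_zsmulHom {p : ℕ} (hp : 1 < p) {ι : ℕ → Type*}
    {H : AddSubgroup (Π₀ k : ℕ, (ι k →₀ ZMod (p ^ k)))}
    (hH : ∀ φ : (Π₀ k : ℕ, (ι k →₀ ZMod (p ^ k))) ≃+ (Π₀ k : ℕ, (ι k →₀ ZMod (p ^ k))),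
      ∀ x ∈ H, φ x ∈ H)
    {m m' a b s : ℕ} (hmm' : m ≠ m') (hs : m' ≤ m + s) (i : ι m) (j : ι m')
    (ha : H.map (DFinsupp.evalAddMonoidHom m) = AddSubgroup.map (zsmulHom ((p : ℤ) ^ a)) ⊤)
    (hb : H.map (DFinsupp.evalAddMonoidHom m') = AddSubgroup.map (zsmulHom ((p : ℤ) ^ b)) ⊤)
    (hlt : a + s < m') :
    b ≤ a + s := by
  obtain ⟨f, hf⟩ : ∃ f : ZMod (p ^ m) →+ ZMod (p ^ m'), f 1 = (p : ZMod (p ^ m')) ^ s := by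
    refine ZMod.exists_addMonoidHom_one_eq ?_
    rw [nsmul_eq_mul, Nat.cast_pow, ← pow_add, ZMod.natCast_self_pow_eq_zero_iff hp]
    exact hs
  have hfa : f ((p : ZMod (p ^ m)) ^ a) = (p : ZMod (p ^ m')) ^ (a + s) := by
    rw [← Nat.cast_pow, ← nsmul_one, map_nsmul, hf, nsmul_eq_mul, Nat.cast_pow, pow_add]
  obtain ⟨x, hx, hxm⟩ : Finsupp.single i ((p : ZMod (p ^ m)) ^ a) ∈
      H.map (DFinsupp.evalAddMonoidHom m) :=
    ha ▸ Finsupp.single_natCast_self_pow_mem_map_zsmulHom i a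
  have hmem := DFinsupp.apply_mem_map_evalAddMonoidHom_of_ne hH hmm'
    ((Finsupp.singleAddHom j).comp (f.comp (Finsupp.applyAddHom i))) hx
  simp only [AddMonoidHom.comp_apply, Finsupp.applyAddHom_apply, Finsupp.singleAddHom_apply] at hmem
  rw [show x m = _ from hxm, Finsupp.single_eq_same, hfa, hb] at hmem
  exact Finsupp.le_of_single_natCast_self_pow_mem_map_zsmulHom hp hlt hmem

/-- Let `B = ⨁_{k≥1} B_k` with `B_k` a direct sum of cyclic groups of order
`p^k`, let `π_k` be the projections and `H` a characteristic subgroup with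
`π_k(H) = p^{n_k} B_k` whenever `π_k(H) ≠ 0`. Then `n_k ≤ n_{k+r} ≤ n_k + r` for
all `k, r ≥ 1` (where both projections are nonzero). -/
theorem stmt12 (p : ℕ) (hp : p.Prime) (ι : ℕ → Type*)
    (H : AddSubgroup (Π₀ k : ℕ, (ι k →₀ ZMod (p ^ k))))
    (hH : ∀ φ : (Π₀ k : ℕ, (ι k →₀ ZMod (p ^ k))) ≃+ (Π₀ k : ℕ, (ι k →₀ ZMod (p ^ k))),
      ∀ x ∈ H, φ x ∈ H)
    (n : ℕ → ℕ)
    (hn : ∀ k : ℕ, H.map (DFinsupp.evalAddMonoidHom k) ≠ ⊥ →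
      H.map (DFinsupp.evalAddMonoidHom k) =
        AddSubgroup.map (zsmulHom ((p : ℤ) ^ n k)) ⊤) :
    ∀ k r : ℕ, 1 ≤ k → 1 ≤ r →
      H.map (DFinsupp.evalAddMonoidHom k) ≠ ⊥ →
      H.map (DFinsupp.evalAddMonoidHom (k + r)) ≠ ⊥ →
      n k ≤ n (k + r) ∧ n (k + r) ≤ n k + r := by
  intro k r _ hr hk hkr
  have hk' := hn k hk
  have hkr' := hn (k + r) hkr
  obtain ⟨⟨i⟩, hnk⟩ := Finsupp.nonempty_and_lt_of_map_zsmulHom_ne_bot hp.one_lt (hk' ▸ hk)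
  obtain ⟨⟨j⟩, -⟩ := Finsupp.nonempty_and_lt_of_map_zsmulHom_ne_bot hp.one_lt (hkr' ▸ hkr)
  constructor
  · rcases le_or_gt k (n (k + r)) with hle | hlt
    · omega
    · simpa using le_add_of_map_evalAddMonoidHom_eq_map_zsmulHom hp.one_lt hH (s := 0)
        (by omega) (by omega) j i hkr' hk' hlt
  · exact le_add_of_map_evalAddMonoidHom_eq_map_zsmulHom hp.one_lt hH
      (by omega) le_rfl i j hk' hkr' (by omega)
end

section
/- Let B = ⊕_{k≥1} B_k with B_k a direct sum of cyclic groups of order p^k, and let H be a characteristic subgroup of B. If B_k has rank at least 2 (i.e., B_k is a direct sum of at least two cyclic summands), then π_k(H) ⊆ H, where π_k : B → B_k is the projection. -/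
/-!
A characteristic subgroup is stable under `g` whenever `g` is an endomorphism with `g ∘ g = 0`,
since `1 + g` is then an automorphism with inverse `1 - g`, and `g x = (1 + g) x - x`.
On `B`, for two distinct coordinates `i ≠ j` of `B_k`, the map moving the `i`-th coordinate of
the `k`-th component to position `j` is such a square-zero endomorphism. Moving from `i` to `j`
and back shows that `H` contains the `(k, i)`-coordinate part of each of its elements, and
`π_k(h)` is the finite sum of these parts.
-/

namespace AddEquiv

variable {M : Type*} [AddCommGroup M]

def ofSquareZero (g : M →+ M) (hg : ∀ y, g (g y) = 0) : M ≃+ M where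
  toFun y := y + g y
  invFun y := y - g y
  left_inv y := by simp [hg]
  right_inv y := by simp [hg]
  map_add' a b := by simp only [map_add]; abel

@[simp]
theorem ofSquareZero_apply (g : M →+ M) (hg : ∀ y, g (g y) = 0) (y : M) :
    ofSquareZero g hg y = y + g y := rfl

end AddEquiv

theorem AddSubgroup.map_mem_of_square_zero {M : Type*} [AddCommGroup M] {H : AddSubgroup M}
    (hH : ∀ φ : M ≃+ M, ∀ x ∈ H, φ x ∈ H) (g : M →+ M) (hg : ∀ y, g (g y) = 0)
    {x : M} (hx : x ∈ H) : g x ∈ H := by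
  have h := H.sub_mem (hH (AddEquiv.ofSquareZero g hg) x hx) hx
  rwa [AddEquiv.ofSquareZero_apply, add_sub_cancel_left] at h

namespace DFinsupp

variable {κ : Type*} [DecidableEq κ] {ι : κ → Type*} {A : κ → Type*} [∀ k, AddCommGroup (A k)]

noncomputable def moveCoord (k : κ) (i j : ι k) : (Π₀ k, ι k →₀ A k) →+ (Π₀ k, ι k →₀ A k) :=
  (singleAddHom (fun k => ι k →₀ A k) k).comp
    ((Finsupp.singleAddHom j).comp ((Finsupp.applyAddHom i).comp (evalAddMonoidHom k)))

@[simp]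
theorem moveCoord_apply (k : κ) (i j : ι k) (y : Π₀ k, ι k →₀ A k) :
    moveCoord k i j y = single k (Finsupp.single j (y k i)) := rfl

theorem moveCoord_moveCoord_of_ne {k : κ} {i j : ι k} (hij : i ≠ j) (y : Π₀ k, ι k →₀ A k) :
    moveCoord k i j (moveCoord k i j y) = 0 := by
  simp [Finsupp.single_eq_of_ne' hij.symm]

theorem single_single_mem_of_ne {H : AddSubgroup (Π₀ k, ι k →₀ A k)}
    (hH : ∀ φ : (Π₀ k, ι k →₀ A k) ≃+ (Π₀ k, ι k →₀ A k), ∀ x ∈ H, φ x ∈ H)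
    {k : κ} {i j : ι k} (hij : i ≠ j) {x : Π₀ k, ι k →₀ A k} (hx : x ∈ H) :
    single k (Finsupp.single i (x k i)) ∈ H := by
  have hxj : moveCoord k i j x ∈ H :=
    H.map_mem_of_square_zero hH _ (moveCoord_moveCoord_of_ne hij) hx
  have hxi := H.map_mem_of_square_zero hH _ (moveCoord_moveCoord_of_ne hij.symm) hxj
  simpa using hxi

theorem single_apply_mem {H : AddSubgroup (Π₀ k, ι k →₀ A k)}
    (hH : ∀ φ : (Π₀ k, ι k →₀ A k) ≃+ (Π₀ k, ι k →₀ A k), ∀ x ∈ H, φ x ∈ H)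
    (k : κ) [Nontrivial (ι k)] {x : Π₀ k, ι k →₀ A k} (hx : x ∈ H) :
    single k (x k) ∈ H := by
  rw [← Finsupp.sum_single (x k), Finsupp.sum, ← singleAddHom_apply, map_sum]
  exact sum_mem fun i _ => single_single_mem_of_ne hH (exists_ne i).choose_spec.symm hx

end DFinsupp

theorem stmt13_general (p : ℕ) (ι : ℕ → Type*)
    (H : AddSubgroup (Π₀ k : ℕ, (ι k →₀ ZMod (p ^ k))))
    (hH : ∀ φ : (Π₀ k : ℕ, (ι k →₀ ZMod (p ^ k))) ≃+ (Π₀ k : ℕ, (ι k →₀ ZMod (p ^ k))),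
      ∀ x ∈ H, φ x ∈ H)
    (k : ℕ) (hrank : ∃ i j : ι k, i ≠ j) :
    ∀ h ∈ H, DFinsupp.single k (h k) ∈ H := by
  obtain ⟨i, j, hij⟩ := hrank
  have : Nontrivial (ι k) := nontrivial_of_ne i j hij
  exact fun h hh => DFinsupp.single_apply_mem hH k hh

/-- Let `B = ⨁_{k≥1} B_k` with `B_k` a direct sum of cyclic groups of order
`p^k`, and `H` a characteristic subgroup of `B`. If `B_k` has rank at least `2`, then
`π_k(H) ⊆ H`. -/
theorem stmt13 (p : ℕ) (hp : p.Prime) (ι : ℕ → Type*)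
    (H : AddSubgroup (Π₀ k : ℕ, (ι k →₀ ZMod (p ^ k))))
    (hH : ∀ φ : (Π₀ k : ℕ, (ι k →₀ ZMod (p ^ k))) ≃+ (Π₀ k : ℕ, (ι k →₀ ZMod (p ^ k))),
      ∀ x ∈ H, φ x ∈ H)
    (k : ℕ) (hk : 1 ≤ k) (hrank : ∃ i j : ι k, i ≠ j) :
    ∀ h ∈ H, DFinsupp.single k (h k) ∈ H :=
  stmt13_general p ι H hH k hrank
end

section
/- Every characteristic subgroup of a homocyclic p-group of rank at least 2 is of the form p^n B for some n. More precisely: if B = ⊕_{i∈I} ⟨a_i⟩ with |I| ≥ 2 and each a_i of order p^k, and H is a nonzero characteristic subgroup of B, then H = p^n B for some 0 ≤ n < k. -/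
/-!
Let `n` be least with `H ⊄ p ^ (n + 1) B`. Then `H ≤ p ^ n B`, and an element `p ^ n • y ∈ H`
outside `p ^ (n + 1) B` has a coordinate `y i` that is a unit of `ℤ/p^kℤ`, since the non-units are
the multiples of `p`. An automorphism (a transvection followed by a coordinate swap) maps such a `y`
to any basis vector `e_j`, so `H` contains every `p ^ n • e_j` and, being a `ℤ/p^kℤ`-submodule,
all of `p ^ n B`.
-/

open Finsupp

theorem mem_map_zsmulHom_top {A : Type*} [AddCommGroup A] {m : ℤ} {x : A} :
    x ∈ (⊤ : AddSubgroup A).map (zsmulHom m) ↔ ∃ y, m • y = x :=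
  ⟨fun ⟨y, _, h⟩ => ⟨y, h⟩, fun ⟨y, h⟩ => ⟨y, trivial, h⟩⟩

theorem map_zsmulHom_top_eq_bot {A : Type*} [AddCommGroup A] {m : ℤ} (h : ∀ x : A, m • x = 0) :
    (⊤ : AddSubgroup A).map (zsmulHom m) = ⊥ := by
  rw [eq_bot_iff]
  rintro _ ⟨y, -, rfl⟩
  exact h y

theorem Finsupp.exists_smul_eq_of_forall_dvd {R ι : Type*} [Semiring R] {c : R} {y : ι →₀ R}
    (h : ∀ i, c ∣ y i) : ∃ z : ι →₀ R, c • z = y := by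
  classical
  choose d hd using h
  refine ⟨onFinset y.support (fun i => if y i = 0 then 0 else d i) fun i hi => ?_, ?_⟩
  · by_contra hyi
    exact hi (if_pos (by simpa using hyi))
  · ext i
    by_cases hyi : y i = 0 <;> simp [hyi, ← hd]

theorem Finsupp.exists_linearEquiv_apply_eq_single {R ι : Type*} [CommRing R] {y : ι →₀ R}
    {i : ι} (hy : IsUnit (y i)) (j : ι) :
    ∃ φ : (ι →₀ R) ≃ₗ[R] (ι →₀ R), φ y = single j 1 := by
  classical
  obtain ⟨u, hu⟩ := hy
  have hv : lapply (R := R) i (single i 1 - u⁻¹ • y) = 0 := by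
    simp [← hu, Units.smul_def]
  refine ⟨((LinearEquiv.smulOfUnit u⁻¹).trans (LinearEquiv.transvection hv)).trans
    (Finsupp.domLCongr (Equiv.swap i j)), ?_⟩
  -- `x ↦ x + x i • (e_i - u⁻¹ • y)` sends `u⁻¹ • y` to `e_i`
  have hy1 : lapply (R := R) i (u⁻¹ • y) = 1 := by
    simp [← hu, Units.smul_def]
  change Finsupp.domLCongr (M := R) (R := R) _ (LinearEquiv.transvection hv (u⁻¹ • y)) = _
  rw [LinearEquiv.transvection.apply, hy1, one_smul, add_sub_cancel, Finsupp.domLCongr_single,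
    Equiv.swap_apply_left]

theorem Submodule.smul_mem_of_isUnit_apply {R ι : Type*} [CommRing R] {N : Submodule R (ι →₀ R)}
    (hN : ∀ φ : (ι →₀ R) ≃ₗ[R] (ι →₀ R), ∀ x ∈ N, φ x ∈ N) {c : R} {y : ι →₀ R} {i : ι}
    (hy : IsUnit (y i)) (hcy : c • y ∈ N) (z : ι →₀ R) : c • z ∈ N := by
  have hsingle : ∀ j, c • single j (1 : R) ∈ N := fun j => by
    obtain ⟨φ, hφ⟩ := exists_linearEquiv_apply_eq_single hy j
    simpa [hφ] using hN φ _ hcy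
  induction z using Finsupp.induction_linear with
  | zero => simp
  | add z₁ z₂ h₁ h₂ => simpa [smul_add] using N.add_mem h₁ h₂
  | single j a =>
    rw [← smul_single_one, smul_comm]
    exact N.smul_mem a (hsingle j)

theorem ZMod.natCast_dvd_of_not_isUnit {p k : ℕ} (hp : p.Prime) {c : ZMod (p ^ k)}
    (hc : ¬IsUnit c) : (p : ZMod (p ^ k)) ∣ c := by
  have : NeZero (p ^ k) := ⟨pow_ne_zero k hp.ne_zero⟩
  rw [← natCast_zmod_val c, isUnit_iff_coprime] at hc
  rw [← natCast_zmod_val c]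
  refine Nat.cast_dvd_cast (by_contra fun hpc => hc ?_)
  exact Nat.Coprime.pow_right k ((hp.coprime_iff_not_dvd.2 hpc).symm)

theorem exists_isUnit_apply_of_notMem_map_zsmulHom {p k n : ℕ} (hp : p.Prime) {ι : Type*}
    {y : ι →₀ ZMod (p ^ k)}
    (h : (p : ℤ) ^ n • y ∉
      (⊤ : AddSubgroup (ι →₀ ZMod (p ^ k))).map (zsmulHom ((p : ℤ) ^ (n + 1)))) :
    ∃ i, IsUnit (y i) := by
  by_contra! hy
  obtain ⟨z, rfl⟩ := exists_smul_eq_of_forall_dvd fun i => ZMod.natCast_dvd_of_not_isUnit hp (hy i)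
  refine h (mem_map_zsmulHom_top.2 ⟨z, ?_⟩)
  rw [pow_succ, mul_smul, ← Int.cast_smul_eq_zsmul (ZMod (p ^ k)) (p : ℤ), Int.cast_natCast]

theorem map_zsmulHom_top_le_of_isUnit_apply {N : ℕ} {ι : Type*} {H : AddSubgroup (ι →₀ ZMod N)}
    (hH : ∀ φ : (ι →₀ ZMod N) ≃+ (ι →₀ ZMod N), ∀ x ∈ H, φ x ∈ H) {m : ℤ} {y : ι →₀ ZMod N}
    {i : ι} (hy : IsUnit (y i)) (hmy : m • y ∈ H) :
    (⊤ : AddSubgroup (ι →₀ ZMod N)).map (zsmulHom m) ≤ H := by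
  rintro _ ⟨z, -, rfl⟩
  have hN : ∀ φ : (ι →₀ ZMod N) ≃ₗ[ZMod N] (ι →₀ ZMod N), ∀ x ∈ H.toZModSubmodule N,
      φ x ∈ H.toZModSubmodule N := fun φ => hH φ.toAddEquiv
  rw [← Int.cast_smul_eq_zsmul (ZMod N)] at hmy
  have := Submodule.smul_mem_of_isUnit_apply hN hy hmy z
  rwa [Int.cast_smul_eq_zsmul] at this

theorem stmt14_general (p k : ℕ) (hp : p.Prime) (ι : Type*)
    (H : AddSubgroup (ι →₀ ZMod (p ^ k)))
    (hH : ∀ φ : (ι →₀ ZMod (p ^ k)) ≃+ (ι →₀ ZMod (p ^ k)), ∀ x ∈ H, φ x ∈ H)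
    (hne : H ≠ ⊥) :
    ∃ n : ℕ, n < k ∧ H = AddSubgroup.map (zsmulHom ((p : ℤ) ^ n)) ⊤ := by
  classical
  set S : ℕ → AddSubgroup (ι →₀ ZMod (p ^ k)) := fun n =>
    (⊤ : AddSubgroup _).map (zsmulHom ((p : ℤ) ^ n))
  have hSk : ∀ n, k ≤ n → S n = ⊥ := fun n hkn => map_zsmulHom_top_eq_bot fun x => by
    rw [← Int.cast_smul_eq_zsmul (ZMod (p ^ k)), Int.cast_pow, Int.cast_natCast,
      pow_eq_zero_of_le hkn (by rw [← Nat.cast_pow, ZMod.natCast_self]), zero_smul]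
  have hex : ∃ m, ¬H ≤ S (m + 1) := ⟨k, by rwa [hSk _ k.le_succ, le_bot_iff]⟩
  set n := Nat.find hex
  have hHn : H ≤ S n := by
    rcases hn : n with _ | m
    · exact fun x _ => mem_map_zsmulHom_top.2 ⟨x, one_smul ℤ x⟩
    · exact not_not.1 (Nat.find_min hex (show m < n by omega))
  have hnk : n < k := by
    by_contra! hkn
    exact hne (le_bot_iff.1 (hSk n hkn ▸ hHn))
  obtain ⟨x, hxH, hxn⟩ := SetLike.not_le_iff_exists.1 (Nat.find_spec hex)
  obtain ⟨y, rfl⟩ := mem_map_zsmulHom_top.1 (hHn hxH)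
  obtain ⟨i, hi⟩ := exists_isUnit_apply_of_notMem_map_zsmulHom hp hxn
  exact ⟨n, hnk, le_antisymm hHn (map_zsmulHom_top_le_of_isUnit_apply hH hi hxH)⟩

/-- Every nonzero characteristic subgroup of a homocyclic `p`-group
`B = ⨁_{i∈I} ℤ/p^kℤ` of rank at least `2` is of the form `p^n B` with `0 ≤ n < k`. -/
theorem stmt14 (p k : ℕ) (hp : p.Prime) (hk : 1 ≤ k) (ι : Type*)
    (hι : ∃ i j : ι, i ≠ j)
    (H : AddSubgroup (ι →₀ ZMod (p ^ k)))
    (hH : ∀ φ : (ι →₀ ZMod (p ^ k)) ≃+ (ι →₀ ZMod (p ^ k)), ∀ x ∈ H, φ x ∈ H)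
    (hne : H ≠ ⊥) :
    ∃ n : ℕ, n < k ∧ H = AddSubgroup.map (zsmulHom ((p : ℤ) ^ n)) ⊤ :=
  stmt14_general p k hp ι H hH hne
end

section
/- Let G = ⟨a⟩ ⊕ ⟨b⟩ where a has order 2^k and b has order 2^{k+r} with r ≥ 2, and let h = 2^{k−1}a + 2^{k+r−2}b and H = ⟨h⟩. Then H = {0, 2^{k−1}a + 2^{k+r−2}b, 2^{k−1}a − 2^{k+r−2}b, 2^{k+r−1}b} is a characteristic subgroup of G that is not fully invariant (the projection of G onto ⟨a⟩ maps H onto ⟨2^{k−1}a⟩ ⊄ H). -/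
private lemma aux_cast_zero {n j : ℕ} (h : n ≤ j) : ((2 ^ j : ℕ) : ZMod (2 ^ n)) = 0 := by
  rw [ZMod.natCast_eq_zero_iff]; exact pow_dvd_pow 2 h

private lemma aux_cast_ne_zero {n j : ℕ} (h : j < n) : ((2 ^ j : ℕ) : ZMod (2 ^ n)) ≠ 0 := by
  rw [Ne, ZMod.natCast_eq_zero_iff]
  intro hd
  have h1 := Nat.le_of_dvd (by positivity) hd
  have h2 := Nat.pow_lt_pow_right (a := 2) (by norm_num) h
  omega

private lemma aux_val_dvd {n j : ℕ} (hj : j ≤ n) (s : ZMod (2 ^ n))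
    (hs : ((2 ^ (n - j) : ℕ) : ZMod (2 ^ n)) * s = 0) : 2 ^ j ∣ s.val := by
  haveI : NeZero (2 ^ n) := ⟨by positivity⟩
  have hv : ((2 ^ (n - j) * s.val : ℕ) : ZMod (2 ^ n)) = 0 := by
    rw [Nat.cast_mul, ZMod.natCast_zmod_val]
    exact hs
  rw [ZMod.natCast_eq_zero_iff] at hv
  obtain ⟨c, hc⟩ := hv
  have hpow : 2 ^ n = 2 ^ (n - j) * 2 ^ j := by rw [← pow_add]; congr 1; omega
  refine ⟨c, ?_⟩
  have h2 : 2 ^ (n - j) * s.val = 2 ^ (n - j) * (2 ^ j * c) := by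
    rw [hc, hpow]; ring
  exact Nat.eq_of_mul_eq_mul_left (by positivity) h2

private lemma aux_two_torsion {n : ℕ} (hn : 1 ≤ n) (s : ZMod (2 ^ n)) (hs : 2 * s = 0) :
    s = 0 ∨ s = ((2 ^ (n - 1) : ℕ) : ZMod (2 ^ n)) := by
  haveI : NeZero (2 ^ n) := ⟨by positivity⟩
  have hdvd : 2 ^ (n - 1) ∣ s.val := by
    apply aux_val_dvd (by omega) s
    have h1 : n - (n - 1) = 1 := by omega
    rw [h1]
    simpa using hs
  obtain ⟨c, hc⟩ := hdvd
  have hlt : s.val < 2 ^ n := ZMod.val_lt s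
  have h2 : 2 ^ n = 2 ^ (n - 1) * 2 := by rw [← pow_succ]; congr 1; omega
  have hcl : c < 2 := by
    by_contra hcl
    push_neg at hcl
    have : 2 ^ (n - 1) * 2 ≤ 2 ^ (n - 1) * c := Nat.mul_le_mul_left _ hcl
    omega
  have hsv : s = ((s.val : ℕ) : ZMod (2 ^ n)) := (ZMod.natCast_zmod_val s).symm
  interval_cases c
  · left; rw [hsv, hc]; simp
  · right; rw [hsv, hc]; simp

/-- In `G = ⟨a⟩ ⊕ ⟨b⟩` with `o(a) = 2^k`, `o(b) = 2^{k+r}`, `r ≥ 2`, the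
subgroup `H = ⟨2^{k-1}a + 2^{k+r-2}b⟩` equals
`{0, 2^{k-1}a + 2^{k+r-2}b, 2^{k-1}a - 2^{k+r-2}b, 2^{k+r-1}b}`, is characteristic in `G`,
but is not fully invariant. -/
theorem stmt15 (k r : ℕ) (hk : 1 ≤ k) (hr : 2 ≤ r) :
    let G := ZMod (2 ^ k) × ZMod (2 ^ (k + r))
    let a : G := (1, 0)
    let b : G := (0, 1)
    let h : G := 2 ^ (k - 1) • a + 2 ^ (k + r - 2) • b
    let H := AddSubgroup.zmultiples h
    ((H : Set G) = {0, h, 2 ^ (k - 1) • a - 2 ^ (k + r - 2) • b, 2 ^ (k + r - 1) • b}) ∧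
    (∀ φ : G ≃+ G, ∀ x ∈ H, φ x ∈ H) ∧
    (∃ f : G →+ G, ∃ x ∈ H, f x ∉ H) := by
  intro G a b h H
  haveI : NeZero (2 ^ k) := ⟨by positivity⟩
  haveI : NeZero (2 ^ (k + r)) := ⟨by positivity⟩
  -- abbreviations (power form)
  set A : ZMod (2 ^ k) := (2 : ZMod (2 ^ k)) ^ (k - 1) with hA
  set B : ZMod (2 ^ (k + r)) := (2 : ZMod (2 ^ (k + r))) ^ (k + r - 2) with hB
  set C : ZMod (2 ^ (k + r)) := (2 : ZMod (2 ^ (k + r))) ^ (k + r - 1) with hC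
  -- smul on pairs
  have hsm : ∀ (m : ℕ) (x : ZMod (2 ^ k)) (y : ZMod (2 ^ (k + r))),
      m • ((x, y) : G) = ((m : ZMod (2 ^ k)) * x, (m : ZMod (2 ^ (k + r))) * y) := by
    intro m x y
    rw [Prod.smul_mk, nsmul_eq_mul, nsmul_eq_mul]
  -- power identities
  have E1 : (2 : ZMod (2 ^ k)) ^ k = 0 := by
    have := ZMod.natCast_self (2 ^ k)
    push_cast at this
    exact this
  have E2 : A * 2 = 0 := by
    rw [hA, ← pow_succ, show k - 1 + 1 = k by omega, E1]
  have E3 : (2 : ZMod (2 ^ k)) ^ (k + r - 2) = 0 := by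
    rw [show k + r - 2 = k + (r - 2) by omega, pow_add, E1, zero_mul]
  have E4 : (2 : ZMod (2 ^ k)) ^ (k + r - 1) = 0 := by
    rw [show k + r - 1 = k + (r - 1) by omega, pow_add, E1, zero_mul]
  have F1 : (2 : ZMod (2 ^ (k + r))) ^ (k + r) = 0 := by
    have := ZMod.natCast_self (2 ^ (k + r))
    push_cast at this
    exact this
  have F2 : C * 2 = 0 := by
    rw [hC, ← pow_succ, show k + r - 1 + 1 = k + r by omega, F1]
  have F3 : B * 2 = C := by
    rw [hB, hC, ← pow_succ]; congr 1; omega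
  have F4 : (2 : ZMod (2 ^ (k + r))) ^ (k - 1) * (2 : ZMod (2 ^ (k + r))) ^ r = C := by
    rw [hC, ← pow_add]; congr 1; omega
  have FN : (2 : ZMod (2 ^ (k + r))) ^ (k - 1) * 2 = (2 : ZMod (2 ^ (k + r))) ^ k := by
    rw [← pow_succ]; congr 1; omega
  -- nonvanishing
  have hA0 : A ≠ 0 := by
    have := aux_cast_ne_zero (n := k) (j := k - 1) (by omega)
    push_cast at this
    rw [hA]; exact this
  have hB0 : B ≠ 0 := by
    have := aux_cast_ne_zero (n := k + r) (j := k + r - 2) (by omega)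
    push_cast at this
    rw [hB]; exact this
  have hC0 : C ≠ 0 := by
    have := aux_cast_ne_zero (n := k + r) (j := k + r - 1) (by omega)
    push_cast at this
    rw [hC]; exact this
  -- description of the relevant elements
  have hh : h = (A, B) := by
    show 2 ^ (k - 1) • ((1, 0) : G) + 2 ^ (k + r - 2) • ((0, 1) : G) = (A, B)
    rw [hsm, hsm, Prod.mk_add_mk]
    refine Prod.ext ?_ ?_ <;> push_cast [hA, hB] <;> ring
  have hd : 2 ^ (k - 1) • a - 2 ^ (k + r - 2) • b = ((A, -B) : G) := by
    show 2 ^ (k - 1) • ((1, 0) : G) - 2 ^ (k + r - 2) • ((0, 1) : G) = (A, -B)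
    rw [hsm, hsm, Prod.mk_sub_mk]
    refine Prod.ext ?_ ?_ <;> push_cast [hA, hB] <;> ring
  have hb2 : 2 ^ (k + r - 1) • b = ((0, C) : G) := by
    show 2 ^ (k + r - 1) • ((0, 1) : G) = (0, C)
    rw [hsm]
    refine Prod.ext ?_ ?_ <;> push_cast [hC] <;> ring
  have haA : 2 ^ (k - 1) • a = ((A, 0) : G) := by
    show 2 ^ (k - 1) • ((1, 0) : G) = (A, 0)
    rw [hsm]
    refine Prod.ext ?_ ?_ <;> push_cast [hA] <;> ring
  have hAneg : -A = A := by
    have h1 : A + A = 0 := by linear_combination E2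
    exact neg_eq_of_add_eq_zero_left h1
  have h2h : 2 • h = ((0, C) : G) := by
    rw [hh, hsm]
    refine Prod.ext ?_ ?_ <;> push_cast
    · linear_combination E2
    · linear_combination F3
  have hneg : -h = ((A, -B) : G) := by
    rw [hh]
    refine Prod.ext ?_ ?_
    · show -A = A; exact hAneg
    · rfl
  have h4h : (4 : ℤ) • h = 0 := by
    have h1 : (4 : ℤ) • h = (2 : ℕ) • ((2 : ℕ) • h) := by
      rw [smul_smul]
      show (4 : ℤ) • h = (4 : ℕ) • h
      exact_mod_cast natCast_zsmul h 4
    rw [h1, h2h, hsm, Prod.mk_eq_zero]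
    constructor <;> push_cast
    · ring
    · linear_combination F2
  have hmem : ∀ x : G, x ∈ H ↔ ∃ n : ℤ, n • h = x := fun x => AddSubgroup.mem_zmultiples_iff
  have hhH : h ∈ H := AddSubgroup.mem_zmultiples h
  have hCH : ((0, C) : G) ∈ H := by
    rw [← h2h]
    exact AddSubgroup.nsmul_mem H hhH 2
  have h2z : (2 : ℤ) • h = ((0, C) : G) := by
    have h1 : (2 : ℤ) • h = (2 : ℕ) • h := by exact_mod_cast natCast_zsmul h 2
    rw [h1, h2h]
  -- Part 1
  have part1 : (H : Set G) = {0, h, 2 ^ (k - 1) • a - 2 ^ (k + r - 2) • b, 2 ^ (k + r - 1) • b} := by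
    ext x
    simp only [SetLike.mem_coe, Set.mem_insert_iff, Set.mem_singleton_iff, hmem, hd, hb2]
    constructor
    · rintro ⟨n, rfl⟩
      have key : n • h = (n % 4) • h := by
        conv_lhs => rw [← Int.emod_add_mul_ediv n 4]
        rw [add_smul, mul_comm, mul_smul, h4h, smul_zero, add_zero]
      have hb0 : 0 ≤ n % 4 := Int.emod_nonneg n (by norm_num)
      have hb1 : n % 4 < 4 := Int.emod_lt_of_pos n (by norm_num)
      set m := n % 4 with hm
      rw [key]
      interval_cases m
      · left; simp
      · right; left; exact one_smul _ _
      · right; right; right; exact h2z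
      · right; right; left
        have h3 : (3 : ℤ) • h = -h := by
          have h31 : (3 : ℤ) • h = (4 : ℤ) • h + (-1 : ℤ) • h := by
            rw [← add_smul]; norm_num
          rw [h31, h4h, zero_add, neg_smul, one_smul]
        rw [h3, hneg]
    · rintro (rfl | rfl | rfl | rfl)
      · exact ⟨0, by simp⟩
      · exact ⟨1, one_smul _ _⟩
      · exact ⟨-1, by rw [neg_smul, one_smul, hneg]⟩
      · exact ⟨2, h2z⟩
  refine ⟨part1, ?_, ?_⟩
  · -- Part 2: characteristic
    intro φ x hx
    obtain ⟨n, rfl⟩ := (hmem x).mp hx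
    rw [map_zsmul]
    apply AddSubgroup.zsmul_mem
    set α : ZMod (2 ^ k) := (φ a).1 with hα
    set β : ZMod (2 ^ (k + r)) := (φ a).2 with hβ
    set γ : ZMod (2 ^ k) := (φ b).1 with hγ
    set δ : ZMod (2 ^ (k + r)) := (φ b).2 with hδ
    have hφa : φ a = (α, β) := rfl
    have hφb : φ b = (γ, δ) := rfl
    -- 2^k • φ a = 0, so 2^r ∣ β.val
    have ha0 : (2 ^ k : ℕ) • a = 0 := by
      show (2 ^ k : ℕ) • ((1, 0) : G) = 0
      rw [hsm, Prod.mk_eq_zero]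
      constructor <;> push_cast <;> simp [E1]
    have habk : (2 ^ k : ℕ) • φ a = 0 := by rw [← map_nsmul, ha0, map_zero]
    have hkβ : (2 : ZMod (2 ^ (k + r))) ^ k * β = 0 := by
      have h1 := congrArg Prod.snd habk
      rw [hφa, hsm] at h1
      push_cast at h1
      exact h1
    have hβdvd : 2 ^ r ∣ β.val := by
      apply aux_val_dvd (by omega) β
      rw [show k + r - r = k by omega]
      push_cast
      exact hkβ
    obtain ⟨mβ, hmβ⟩ := hβdvd
    have hβeq : β = (2 : ZMod (2 ^ (k + r))) ^ r * (mβ : ZMod (2 ^ (k + r))) := by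
      conv_lhs => rw [← ZMod.natCast_zmod_val β, hmβ]
      push_cast
      ring
    -- δ is odd
    have hδodd : ¬ 2 ∣ δ.val := by
      intro hdvd
      obtain ⟨t, ht⟩ := hdvd
      have hδt : δ = 2 * (t : ZMod (2 ^ (k + r))) := by
        conv_lhs => rw [← ZMod.natCast_zmod_val δ, ht]
        push_cast
        ring
      have hb0' : φ ((2 ^ (k + r - 1) : ℕ) • b) = 0 := by
        rw [map_nsmul, hφb, hsm, Prod.mk_eq_zero]
        constructor <;> push_cast
        · show (2 : ZMod (2 ^ k)) ^ (k + r - 1) * γ = 0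
          rw [E4, zero_mul]
        · show (2 : ZMod (2 ^ (k + r))) ^ (k + r - 1) * δ = 0
          rw [hδt]
          linear_combination (t : ZMod (2 ^ (k + r))) * F2
      have hinj := φ.injective (by rw [hb0', map_zero] : φ ((2 ^ (k + r - 1) : ℕ) • b) = φ 0)
      rw [hb2] at hinj
      exact hC0 (congrArg Prod.snd hinj)
    obtain ⟨d, hdval⟩ : ∃ d : ℕ, δ.val = 2 * d + 1 := by
      rcases Nat.even_or_odd δ.val with he | ho
      · exact absurd he.two_dvd hδodd
      · obtain ⟨d, hd'⟩ := ho
        exact ⟨d, by omega⟩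
    have hδeq : δ = 2 * (d : ZMod (2 ^ (k + r))) + 1 := by
      conv_lhs => rw [← ZMod.natCast_zmod_val δ, hdval]
      push_cast
      ring
    -- α is odd
    have hαodd : ¬ 2 ∣ α.val := by
      intro hdvd
      obtain ⟨t, ht⟩ := hdvd
      have hαt : α = 2 * (t : ZMod (2 ^ k)) := by
        conv_lhs => rw [← ZMod.natCast_zmod_val α, ht]
        push_cast
        ring
      have hAα : A * α = 0 := by
        rw [hαt]
        linear_combination (t : ZMod (2 ^ k)) * E2
      set s : ZMod (2 ^ (k + r)) := (2 : ZMod (2 ^ (k + r))) ^ (k - 1) * β with hs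
      have h2s : 2 * s = 0 := by
        rw [hs]
        linear_combination β * FN + hkβ
      have hφA : φ ((2 ^ (k - 1) : ℕ) • a) = ((0 : ZMod (2 ^ k)), s) := by
        rw [map_nsmul, hφa, hsm]
        refine Prod.ext ?_ ?_ <;> push_cast
        · show (2 : ZMod (2 ^ k)) ^ (k - 1) * α = 0
          rw [← hA]; exact hAα
        · show (2 : ZMod (2 ^ (k + r))) ^ (k - 1) * β = s
          rw [hs]
      rcases aux_two_torsion (by omega) s h2s with hs0 | hsC
      · have hinj := φ.injective
          (by rw [hφA, hs0, map_zero]; exact Prod.mk_eq_zero.mpr ⟨rfl, rfl⟩ :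
            φ ((2 ^ (k - 1) : ℕ) • a) = φ 0)
        rw [haA] at hinj
        exact hA0 (congrArg Prod.fst hinj)
      · push_cast at hsC
        have hφB1 : φ ((2 ^ (k + r - 1) : ℕ) • b) = ((0 : ZMod (2 ^ k)), C) := by
          rw [map_nsmul, hφb, hsm]
          refine Prod.ext ?_ ?_ <;> push_cast
          · show (2 : ZMod (2 ^ k)) ^ (k + r - 1) * γ = 0
            rw [E4, zero_mul]
          · show (2 : ZMod (2 ^ (k + r))) ^ (k + r - 1) * δ = C
            rw [hδeq, hC]
            linear_combination (d : ZMod (2 ^ (k + r))) * F2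
        have heq : φ ((2 ^ (k - 1) : ℕ) • a) = φ ((2 ^ (k + r - 1) : ℕ) • b) := by
          rw [hφA, hφB1, hsC, hC]
        have hinj := φ.injective heq
        rw [haA, hb2] at hinj
        exact hA0 (congrArg Prod.fst hinj)
    obtain ⟨t, htval⟩ : ∃ t : ℕ, α.val = 2 * t + 1 := by
      rcases Nat.even_or_odd α.val with he | ho
      · exact absurd he.two_dvd hαodd
      · obtain ⟨t, ht'⟩ := ho
        exact ⟨t, by omega⟩
    have hαeq : α = 2 * (t : ZMod (2 ^ k)) + 1 := by
      conv_lhs => rw [← ZMod.natCast_zmod_val α, htval]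
      push_cast
      ring
    -- compute φ h
    have hφh : φ h = h + (mβ + d) • ((0, C) : G) := by
      have hhd : h = (2 ^ (k - 1) : ℕ) • a + (2 ^ (k + r - 2) : ℕ) • b := rfl
      conv_lhs => rw [hhd, map_add, map_nsmul, map_nsmul, hφa, hφb, hsm, hsm, Prod.mk_add_mk]
      conv_rhs => rw [hh, hsm, Prod.mk_add_mk]
      rw [Prod.mk.injEq]
      constructor <;> push_cast
      · rw [hA]
        linear_combination (2 : ZMod (2 ^ k)) ^ (k - 1) * hαeq + (t : ZMod (2 ^ k)) * E2 + γ * E3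
      · rw [hB, hC]
        linear_combination (2 : ZMod (2 ^ (k + r))) ^ (k - 1) * hβeq +
          (2 : ZMod (2 ^ (k + r))) ^ (k + r - 2) * hδeq +
          (mβ : ZMod (2 ^ (k + r))) * F4 + (d : ZMod (2 ^ (k + r))) * F3
    rw [hφh]
    exact H.add_mem hhH (AddSubgroup.nsmul_mem H hCH _)
  · -- Part 3: not fully invariant
    refine ⟨(AddMonoidHom.inl (ZMod (2 ^ k)) (ZMod (2 ^ (k + r)))).comp
      (AddMonoidHom.fst (ZMod (2 ^ k)) (ZMod (2 ^ (k + r)))), h, hhH, ?_⟩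
    have hf : ((AddMonoidHom.inl (ZMod (2 ^ k)) (ZMod (2 ^ (k + r)))).comp
        (AddMonoidHom.fst (ZMod (2 ^ k)) (ZMod (2 ^ (k + r))))) h = ((A, 0) : G) := by
      rw [hh]; rfl
    rw [hf]
    intro hcon
    have hmem' : ((A, 0) : G) ∈ (H : Set G) := hcon
    rw [part1, hd, hb2] at hmem'
    rcases hmem' with h1 | h1 | h1 | h1
    · exact hA0 (congrArg Prod.fst h1)
    · rw [hh] at h1
      exact hB0 ((congrArg Prod.snd h1).symm)
    · have h2 := congrArg Prod.snd h1
      simp only at h2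
      exact hB0 (by rw [← neg_neg B, ← h2, neg_zero])
    · exact hA0 (congrArg Prod.fst h1)
end

section
/- Let G be a separable abelian p-group (i.e., the first Ulm subgroup p^ωG = ⋂_n p^nG is zero), let H be an unbounded characteristic subgroup of G, and let B be a basic subgroup of G. Then G = H + B. -/
universe u

private lemma aux_smul_mod {G : Type*} [AddCommGroup G] (k a : ℕ) (z : G) (hz : k • z = 0) :
    a • z = (a % k) • z := by
  conv_lhs => rw [← Nat.mod_add_div a k]
  rw [add_nsmul, mul_comm, mul_smul, hz, smul_zero, add_zero]

private lemma aux_cast_smul_eq {G : Type*} [AddCommGroup G] (k a b : ℕ) (z : G)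
    (hz : k • z = 0) (h : (a : ZMod k) = (b : ZMod k)) : a • z = b • z := by
  rw [aux_smul_mod k a z hz, aux_smul_mod k b z hz,
    (ZMod.natCast_eq_natCast_iff a b k).mp h]

private lemma aux_zmod_unit (p r m : ℕ) (hp : p.Prime) (w : ZMod (p ^ r))
    (hw : p ^ m • w ≠ 0) :
    ∃ (t : ℕ) (v : (ZMod (p ^ r))ˣ), m + t < r ∧
      w = (p ^ t : ℕ) * (v : ZMod (p ^ r)) := by
  haveI : NeZero (p ^ r) := ⟨pow_ne_zero _ hp.pos.ne'⟩
  have hw0 : w ≠ 0 := by rintro rfl; exact hw (smul_zero _)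
  set a := w.val with ha
  have ha0 : a ≠ 0 := fun h => hw0 ((ZMod.val_eq_zero w).mp h)
  set t := a.factorization p with ht
  set a' := a / p ^ t with ha'
  have hfact : p ^ t * a' = a := Nat.ordProj_mul_ordCompl_eq_self a p
  have hnd : ¬ p ∣ a' := Nat.not_dvd_ordCompl hp ha0
  have hco : Nat.Coprime a' (p ^ r) :=
    Nat.Coprime.pow_right r (((Nat.Prime.coprime_iff_not_dvd hp).mpr hnd).symm)
  refine ⟨t, ZMod.unitOfCoprime a' hco, ?_, ?_⟩
  · by_contra hle
    push_neg at hle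
    apply hw
    have hwa : w = (a : ZMod (p ^ r)) := (ZMod.natCast_rightInverse w).symm
    have : p ^ m • w = ((p ^ m * a : ℕ) : ZMod (p ^ r)) := by
      rw [nsmul_eq_mul, hwa]; push_cast; ring
    rw [this, ZMod.natCast_eq_zero_iff]
    calc p ^ r ∣ p ^ (m + t) := pow_dvd_pow p hle
    _ ∣ p ^ m * a := by rw [← hfact, pow_add]; exact mul_dvd_mul_left _ (dvd_mul_right _ _)
  · have hwa : w = (a : ZMod (p ^ r)) := (ZMod.natCast_rightInverse w).symm
    rw [hwa, ZMod.coe_unitOfCoprime, ← hfact]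
    push_cast; ring

/-- If `G` is a separable abelian `p`-group (`⋂ p^nG = 0`), `H` is an
unbounded characteristic subgroup of `G`, and `B` is a basic subgroup of `G`, then
`G = H + B`. -/
theorem stmt17 {G : Type u} [AddCommGroup G] (p : ℕ) (hp : p.Prime)
    (hpgroup : ∀ g : G, ∃ m : ℕ, p ^ m • g = 0)
    (hsep : ∀ g : G, (∀ n : ℕ, ∃ x : G, p ^ n • x = g) → g = 0)
    (B : AddSubgroup G)
    (hpure : ∀ (n : ℕ) (b : G), b ∈ B → (∃ g : G, p ^ n • g = b) → ∃ c ∈ B, p ^ n • c = b)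
    (hdsc : ∃ (ι : Type u) (f : ι → ℕ), Nonempty (B ≃+ (Π₀ i : ι, ZMod (p ^ f i))))
    (hbasic : ∀ (n : ℕ) (g : G), ∃ b ∈ B, ∃ x : G, g = b + p ^ n • x)
    (H : AddSubgroup G)
    (hH : ∀ φ : G ≃+ G, ∀ x ∈ H, φ x ∈ H)
    (hunb : ∀ n : ℕ, ∃ h ∈ H, p ^ n • h ≠ 0) :
    ∀ g : G, ∃ h ∈ H, ∃ b ∈ B, g = h + b := by
  classical
  obtain ⟨ι, f, ⟨e⟩⟩ := hdsc
  -- glue: p^a • (p^b • z) = p^(a+b) • z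
  have comb : ∀ (a b : ℕ) (z : G), p ^ a • (p ^ b • z) = p ^ (a + b) • z := by
    intro a b z; rw [smul_smul, ← pow_add]
  -- kill lemma in ZMod
  have killZ : ∀ (k : ℕ) (v : ZMod (p ^ k)), p ^ k • v = 0 := by
    intro k v
    rw [nsmul_eq_mul, Nat.cast_pow, ← Nat.cast_pow, ZMod.natCast_self, zero_mul]
  -- evaluation homs
  set E : ∀ i : ι, B →+ ZMod (p ^ f i) :=
    fun i => (DFinsupp.evalAddMonoidHom i).comp e.toAddMonoidHom with hE
  -- the coordinate functions on G
  have hdec : ∀ (i : ι) (z : G), ∃ b, b ∈ B ∧ ∃ x, z = b + p ^ f i • x := by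
    intro i z; obtain ⟨b, hb, x, hx⟩ := hbasic (f i) z; exact ⟨b, hb, x, hx⟩
  set cf : ∀ i : ι, G → ZMod (p ^ f i) :=
    fun i z => E i ⟨(hdec i z).choose, (hdec i z).choose_spec.1⟩ with hcf
  -- well-definedness
  have wd : ∀ (i : ι) (z b : G) (hb : b ∈ B) (x : G),
      z = b + p ^ f i • x → cf i z = E i ⟨b, hb⟩ := by
    intro i z b hb x hzx
    obtain ⟨x₀, hx₀⟩ := (hdec i z).choose_spec.2
    set b₀ := (hdec i z).choose
    have hb₀ : b₀ ∈ B := (hdec i z).choose_spec.1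
    have hdiff : b₀ - b = p ^ f i • (x - x₀) := by
      have heq : b₀ + p ^ f i • x₀ = b + p ^ f i • x := by rw [← hx₀, ← hzx]
      have h' : b₀ = b + p ^ f i • x - p ^ f i • x₀ := by rw [← heq]; abel
      rw [h', smul_sub]; abel
    obtain ⟨d, hd, hdd⟩ := hpure (f i) (b₀ - b) (B.sub_mem hb₀ hb) ⟨x - x₀, hdiff.symm⟩
    have hsub : (⟨b₀, hb₀⟩ - ⟨b, hb⟩ : B) = p ^ f i • (⟨d, hd⟩ : B) := by
      apply Subtype.ext
      have h1 : ((p ^ f i • (⟨d, hd⟩ : B) : B) : G) = p ^ f i • d := by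
        exact map_nsmul B.subtype _ _
      rw [h1]; rw [hdd]; rfl
    have : E i ⟨b₀, hb₀⟩ - E i ⟨b, hb⟩ = 0 := by
      rw [← map_sub, hsub, map_nsmul, killZ]
    exact sub_eq_zero.mp this
  -- bundled coordinate homs
  have cadd : ∀ (i : ι) (z₁ z₂ : G), cf i (z₁ + z₂) = cf i z₁ + cf i z₂ := by
    intro i z₁ z₂
    obtain ⟨x₁, hx₁⟩ := (hdec i z₁).choose_spec.2
    obtain ⟨x₂, hx₂⟩ := (hdec i z₂).choose_spec.2
    have hb₁ := (hdec i z₁).choose_spec.1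
    have hb₂ := (hdec i z₂).choose_spec.1
    have h12 : z₁ + z₂ = ((hdec i z₁).choose + (hdec i z₂).choose)
        + p ^ f i • (x₁ + x₂) := by
      conv_lhs => rw [hx₁, hx₂]
      rw [smul_add]; abel
    rw [wd i (z₁ + z₂) _ (B.add_mem hb₁ hb₂) _ h12]
    have : (⟨(hdec i z₁).choose + (hdec i z₂).choose, B.add_mem hb₁ hb₂⟩ : B)
        = ⟨(hdec i z₁).choose, hb₁⟩ + ⟨(hdec i z₂).choose, hb₂⟩ := rfl
    rw [this, map_add]
  set C : ∀ i : ι, G →+ ZMod (p ^ f i) := fun i => AddMonoidHom.mk' (cf i) (cadd i) with hC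
  -- C on B
  have cB : ∀ (i : ι) (b : G) (hb : b ∈ B), C i b = E i ⟨b, hb⟩ := by
    intro i b hb
    exact wd i b b hb 0 (by rw [smul_zero, add_zero])
  -- C kills p^(f i) • G
  have ckill : ∀ (i : ι) (x : G), C i (p ^ f i • x) = 0 := by
    intro i x
    have := wd i (p ^ f i • x) 0 B.zero_mem x (by rw [zero_add])
    have h0 : (⟨(0 : G), B.zero_mem⟩ : B) = 0 := rfl
    rw [h0, map_zero] at this
    exact this
  -- nonvanishing of coordinates
  have lemA : ∀ z : G, z ≠ 0 → ∃ i : ι, C i z ≠ 0 := by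
    intro z hz
    by_contra hall
    push_neg at hall
    apply hz
    apply hsep
    intro n
    obtain ⟨b, hb, x, hzx⟩ := hbasic n z
    have key : ∀ i : ι, E i ⟨b, hb⟩ = p ^ n • (-(C i x)) := by
      intro i
      have h0 : (0 : ZMod (p ^ f i)) = C i z := (hall i).symm
      rw [hzx, map_add, map_nsmul, cB i b hb] at h0
      rw [smul_neg]
      exact eq_neg_of_add_eq_zero_left h0.symm
    set D : Π₀ i : ι, ZMod (p ^ f i) :=
      DFinsupp.mk (e ⟨b, hb⟩).support (fun i => -(C i.1 x)) with hD
    have hDs : p ^ n • D = e ⟨b, hb⟩ := by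
      ext i
      have happ : (p ^ n • D) i = p ^ n • D i := DFinsupp.smul_apply _ _ _
      rw [happ, hD, DFinsupp.mk_apply]
      split_ifs with hi
      · exact (key i).symm
      · rw [smul_zero]
        exact (DFinsupp.notMem_support_iff.mp hi).symm
    have hbeq : (⟨b, hb⟩ : B) = p ^ n • e.symm D := by
      rw [← map_nsmul, hDs, AddEquiv.symm_apply_apply]
    have hbeq' : b = p ^ n • (↑(e.symm D) : G) := by
      have := congrArg B.subtype hbeq
      rwa [map_nsmul] at this
    exact ⟨(↑(e.symm D) : G) + x, by rw [smul_add, ← hbeq', ← hzx]⟩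
  -- main argument
  intro g
  obtain ⟨m, hm⟩ := hpgroup g
  obtain ⟨h, hhH, hh⟩ := hunb m
  obtain ⟨i, hi⟩ := lemA (p ^ m • h) hh
  rw [map_nsmul] at hi
  obtain ⟨t, v, htlt, hwv⟩ := aux_zmod_unit p (f i) m hp (C i h) hi
  haveI : NeZero (p ^ f i) := ⟨pow_ne_zero _ hp.pos.ne'⟩
  -- decompose g at level f i + t, and adjust for order
  obtain ⟨b0, hb0, x0, hgx0⟩ := hbasic (f i + t) g
  have hpmb : p ^ m • b0 = p ^ (m + (f i + t)) • (-x0) := by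
    have h0 : (0 : G) = p ^ m • b0 + p ^ m • (p ^ (f i + t) • x0) := by
      rw [← smul_add, ← hgx0, hm]
    rw [comb m (f i + t) x0] at h0
    rw [smul_neg]
    exact eq_neg_of_add_eq_zero_left h0.symm
  obtain ⟨cc, hcc, hcceq⟩ := hpure (m + (f i + t)) (p ^ m • b0)
    (AddSubgroup.nsmul_mem B hb0 _) ⟨-x0, hpmb.symm⟩
  set b' := b0 - p ^ (f i + t) • cc with hb'def
  have hb' : b' ∈ B := B.sub_mem hb0 (AddSubgroup.nsmul_mem B hcc _)
  set x' := x0 + cc with hx'def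
  have hgb' : g = b' + p ^ (f i + t) • x' := by
    rw [hb'def, hx'def, smul_add, hgx0]; abel
  set Y := p ^ (f i + t) • x' with hYdef
  have hYm : p ^ m • Y = 0 := by
    have h1 : Y = g - b' := by rw [hgb']; abel
    rw [h1, smul_sub, hm, hb'def, smul_sub, comb m (f i + t) cc, hcceq]
    abel
  have hYfi : p ^ f i • Y = 0 := by
    have h1 : f i = (f i - m) + m := by omega
    rw [h1, ← comb (f i - m) m Y, hYm, smul_zero]
  -- the perturbation element y
  set u' : ℕ := ((v⁻¹ : (ZMod (p ^ f i))ˣ) : ZMod (p ^ f i)).val with hu'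
  set y : G := u' • (p ^ f i • x') with hy
  have hyfi : p ^ f i • y = 0 := by
    rw [hy, smul_comm, comb (f i) (f i)]
    have h1 : f i + f i = ((f i - t - m) + m) + (f i + t) := by omega
    rw [h1, ← comb ((f i - t - m) + m) (f i + t) x', ← hYdef,
      ← comb (f i - t - m) m Y, hYm, smul_zero, smul_zero]
  have hcy : C i y = 0 := by
    rw [hy, map_nsmul, ckill, smul_zero]
  -- the transvection F
  set F : G →+ G := AddMonoidHom.mk' (fun z => (C i z).val • y) (by
    intro z₁ z₂
    show (C i (z₁ + z₂)).val • y = (C i z₁).val • y + (C i z₂).val • y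
    rw [map_add, ZMod.val_add, ← aux_smul_mod _ _ y hyfi, add_nsmul]) with hF
  have hFapp : ∀ z : G, F z = (C i z).val • y := fun z => rfl
  have hFF : ∀ z : G, F (F z) = 0 := by
    intro z
    have h1 : C i (F z) = 0 := by
      rw [hFapp, map_nsmul, hcy, smul_zero]
    rw [hFapp, h1, ZMod.val_zero, zero_smul]
  -- the automorphism
  set φ : G ≃+ G :=
    { toFun := fun z => z + F z
      invFun := fun z => z - F z
      left_inv := by intro z; simp only [map_add, hFF]; abel
      right_inv := by intro z; simp only [map_sub, hFF]; abel
      map_add' := by intro a b; simp only [map_add]; abel } with hφ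
  have hφh : φ h = h + F h := rfl
  have hYH : Y ∈ H := by
    have h1 : φ h - h ∈ H := H.sub_mem (hH φ h hhH) hhH
    have h2 : φ h - h = F h := by rw [hφh]; abel
    rw [h2] at h1
    have h3 : F h = Y := by
      rw [hFapp]
      have s1 : ((C i h).val : ZMod (p ^ f i))
          = ((p ^ t * (v : ZMod (p ^ f i)).val : ℕ) : ZMod (p ^ f i)) := by
        rw [ZMod.natCast_rightInverse, hwv]
        push_cast
        rw [ZMod.natCast_rightInverse]
      rw [aux_cast_smul_eq _ _ _ y hyfi s1]
      -- (p^t * v.val) • y = (v.val * u') • Y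
      have s2 : (p ^ t * (v : ZMod (p ^ f i)).val) • y
          = ((v : ZMod (p ^ f i)).val * u') • Y := by
        rw [hy, hYdef, smul_smul, smul_smul, smul_smul]
        congr 1
        rw [pow_add]
        ring
      rw [s2]
      have s3 : (((v : ZMod (p ^ f i)).val * u' : ℕ) : ZMod (p ^ f i))
          = ((1 : ℕ) : ZMod (p ^ f i)) := by
        push_cast
        rw [hu', ZMod.natCast_rightInverse, ZMod.natCast_rightInverse]
        rw [← Units.val_mul, mul_inv_cancel, Units.val_one]
      rw [aux_cast_smul_eq _ _ _ Y hYfi s3, one_smul]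
    rwa [h3] at h1
  exact ⟨Y, hYH, b', hb', by rw [hgb']; exact add_comm _ _⟩
end

section
/- Let G be a p-group and H a characteristic subgroup of G such that H/(H ∩ p^ωG) is unbounded. Then p^ωG ⊆ H. -/
/-!
Let `g ∈ p^ωG` with `p^k g = 0` and pick `h ∈ H` such that `p^k h` has finite height `s`.
Projecting onto a cyclic summand of order `p^(s+1)` gives `π : G → ℤ/p^(s+1)` with
`π (p^k h) = p^s`, so `π h = c` with `c p^k = p^s (1 + p l)`. Writing `g = p^(2s+1) w`, the
element `e = p^(k+s+1) w` lies in `p^(s+1) G`, is killed by `p^(s+1)` and satisfies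
`c e = (1 + p l) g`. Then `F x = π(x) e` satisfies `F ∘ F = 0`, so `1 + F` is an automorphism
and `F h = (1 + p l) g ∈ H`; since `1 + p l` is a unit modulo `p^k`, `g ∈ H`.
-/

section

variable {G : Type*} [AddCommGroup G]

lemma ZMod.mem_range_toAddCircle_of_nsmul_eq_zero {n : ℕ} [NeZero n] {u : UnitAddCircle}
    (hu : n • u = 0) : u ∈ (ZMod.toAddCircle : ZMod n →+ UnitAddCircle).range := by
  obtain ⟨m, -, rfl⟩ := (AddCircle.nsmul_eq_zero_iff (NeZero.pos n)).mp hu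
  exact ⟨m, by rw [ZMod.toAddCircle_natCast, mul_one]⟩

/-- A cyclic subgroup of maximal order `n` in a group of exponent dividing `n` is a direct
summand. -/
lemma exists_addMonoidHom_zmod_apply_eq_one {n : ℕ} [NeZero n] (hG : ∀ x : G, n • x = 0)
    {q : G} (hq : addOrderOf q = n) : ∃ π : G →+ ZMod n, π q = 1 := by
  let f : {f : ℤ →+ G // f n = 0} := ⟨zmultiplesHom G q, by simp [← hq]⟩
  let ι : ZMod n →+ G := ZMod.lift n f
  have hι_intCast (z : ℤ) : ι z = z • q := ZMod.lift_coe n f z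
  have hι : Function.Injective ι := by
    refine (injective_iff_map_eq_zero ι).mpr fun z hz => ?_
    obtain ⟨z, rfl⟩ := ZMod.intCast_surjective z
    rw [ZMod.intCast_zmod_eq_zero_iff_dvd, ← hq, addOrderOf_dvd_iff_zsmul_eq_zero, ← hι_intCast,
      hz]
  obtain ⟨c, hc⟩ := (Module.Baer.of_divisible UnitAddCircle).extension_property_addMonoidHom
    ι hι ZMod.toAddCircle
  have hc_mem (x : G) : c x ∈ (ZMod.toAddCircle : ZMod n →+ UnitAddCircle).range :=
    ZMod.mem_range_toAddCircle_of_nsmul_eq_zero (by rw [← map_nsmul, hG, map_zero])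
  let e := AddMonoidHom.ofInjective (ZMod.toAddCircle_injective n)
  refine ⟨e.symm.toAddMonoidHom.comp (c.codRestrict _ hc_mem), e.injective ?_⟩
  ext
  have hq1 : ι 1 = q := by simpa using hι_intCast 1
  simp [e, ← hq1, ← AddMonoidHom.comp_apply c ι, hc, AddMonoidHom.ofInjective_apply]

lemma exists_addMonoidHom_zmod_pow_apply_eq_one {p : ℕ} (hp : p.Prime) {s : ℕ} {b : G}
    (hb : ¬ ∃ w : G, p ^ (s + 1) • w = p ^ s • b) : ∃ π : G →+ ZMod (p ^ (s + 1)), π b = 1 := by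
  have := Fact.mk hp
  have : NeZero (p ^ (s + 1)) := ⟨pow_ne_zero _ hp.ne_zero⟩
  let N := (nsmulAddMonoidHom (α := G) (p ^ (s + 1))).range
  have hmk_eq_zero (x : G) : (x : G ⧸ N) = 0 ↔ ∃ w : G, p ^ (s + 1) • w = x :=
    QuotientAddGroup.eq_zero_iff x
  have hQ (x : G ⧸ N) : p ^ (s + 1) • x = 0 := by
    induction x using QuotientAddGroup.induction_on with
    | H y => rw [← QuotientAddGroup.mk_nsmul, hmk_eq_zero]; exact ⟨y, rfl⟩
  have hb' : addOrderOf (b : G ⧸ N) = p ^ (s + 1) :=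
    addOrderOf_eq_prime_pow (by rwa [← QuotientAddGroup.mk_nsmul, hmk_eq_zero]) (hQ _)
  obtain ⟨π, hπ⟩ := exists_addMonoidHom_zmod_apply_eq_one hQ hb'
  exact ⟨π.comp (QuotientAddGroup.mk' N), hπ⟩

lemma exists_pow_smul_eq_and_not_exists_pow_succ_smul_eq {p : ℕ} {x : G}
    (hx : ¬ ∀ n : ℕ, ∃ y : G, p ^ n • y = x) :
    ∃ s : ℕ, (∃ y : G, p ^ s • y = x) ∧ ¬ ∃ w : G, p ^ (s + 1) • w = x := by
  classical
  push Not at hx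
  have hfind : Nat.find hx ≠ 0 := fun h0 => (h0 ▸ Nat.find_spec hx) x (one_smul ℕ x)
  refine ⟨Nat.find hx - 1, ?_, ?_⟩
  · simpa using Nat.find_min hx (Nat.sub_lt (Nat.pos_of_ne_zero hfind) one_pos)
  · simpa [Nat.sub_add_cancel (Nat.pos_of_ne_zero hfind)] using Nat.find_spec hx

lemma exists_addMonoidHom_zmod_pow_apply_eq_pow {p : ℕ} (hp : p.Prime) {x : G}
    (hx : ¬ ∀ n : ℕ, ∃ y : G, p ^ n • y = x) :
    ∃ (s : ℕ) (π : G →+ ZMod (p ^ (s + 1))), π x = (p : ZMod (p ^ (s + 1))) ^ s := by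
  obtain ⟨s, ⟨y, rfl⟩, hs⟩ := exists_pow_smul_eq_and_not_exists_pow_succ_smul_eq hx
  obtain ⟨π, hπ⟩ := exists_addMonoidHom_zmod_pow_apply_eq_one hp hs
  exact ⟨s, π, by rw [map_nsmul, hπ, nsmul_one, Nat.cast_pow]⟩

def AddEquiv.oneAddOfSqEqZero (F : G →+ G) (hF : ∀ x, F (F x) = 0) : G ≃+ G where
  toFun x := x + F x
  invFun x := x - F x
  left_inv x := by simp [hF]
  right_inv x := by simp [hF]
  map_add' x y := by simp only [map_add]; abel

lemma AddSubgroup.mem_of_zsmul_mem_of_isCoprime {H : AddSubgroup G} {g : G} {m u : ℤ}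
    (hm : m • g = 0) (hmu : IsCoprime m u) (hu : u • g ∈ H) : g ∈ H := by
  obtain ⟨a, b, hab⟩ := hmu
  have : g = b • u • g := calc
    g = (a * m + b * u) • g := by rw [hab, one_smul]
    _ = b • u • g := by rw [add_smul, mul_smul, hm, smul_zero, zero_add, mul_smul]
  exact this ▸ H.zsmul_mem hu b

lemma AddSubgroup.zsmul_mem_of_forall_addEquiv_mem {H : AddSubgroup G}
    (hH : ∀ φ : G ≃+ G, ∀ x ∈ H, φ x ∈ H) {n : ℕ} (π : G →+ ZMod n) {e : G} (he : n • e = 0)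
    (hπe : π e = 0) {h : G} (hh : h ∈ H) {c : ℤ} (hc : (c : ZMod n) = π h) : c • e ∈ H := by
  let L : ZMod n →+ G := ZMod.lift n ⟨zmultiplesHom G e, by simpa using he⟩
  have hL (z : ℤ) : L z = z • e := by simp [L]
  have hπL (z : ZMod n) : π (L z) = 0 := by
    obtain ⟨z, rfl⟩ := ZMod.intCast_surjective z
    rw [hL, map_zsmul, hπe, smul_zero]
  let φ := AddEquiv.oneAddOfSqEqZero (L.comp π) fun x => by simp [hπL]
  have hφ : φ h - h = c • e := by simp [φ, AddEquiv.oneAddOfSqEqZero, ← hc, hL]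
  exact hφ ▸ H.sub_mem (hH φ h hh) hh

end

/-- If `G` is an abelian `p`-group and `H` a characteristic subgroup such
that `H/(H ∩ p^ωG)` is unbounded (for each `s` there is `h ∈ H` with `p^s h ∉ p^ωG`),
then `p^ωG ⊆ H`. -/
theorem stmt18 {G : Type*} [AddCommGroup G] (p : ℕ) (hp : p.Prime)
    (hpgroup : ∀ g : G, ∃ m : ℕ, p ^ m • g = 0)
    (H : AddSubgroup G)
    (hH : ∀ φ : G ≃+ G, ∀ x ∈ H, φ x ∈ H)
    (hunb : ∀ s : ℕ, ∃ h ∈ H, ¬ (∀ n : ℕ, ∃ y : G, p ^ n • y = p ^ s • h)) :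
    ∀ g : G, (∀ n : ℕ, ∃ y : G, p ^ n • y = g) → g ∈ H := by
  intro g hg
  obtain ⟨k, hk⟩ := hpgroup g
  obtain ⟨h, hhH, hh⟩ := hunb k
  obtain ⟨s, π, hπ⟩ := exists_addMonoidHom_zmod_pow_apply_eq_pow hp hh
  obtain ⟨c, hc⟩ := ZMod.intCast_surjective (π h)
  obtain ⟨l, hl⟩ : ((p ^ (s + 1) : ℕ) : ℤ) ∣ c * p ^ k - p ^ s := by
    rw [← ZMod.intCast_zmod_eq_zero_iff_dvd]
    push_cast
    rw [hc, sub_eq_zero, ← hπ, map_nsmul, nsmul_eq_mul, Nat.cast_pow, mul_comm]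
  obtain ⟨w, hw⟩ := hg (s + 1 + s)
  have he : p ^ (s + 1) • p ^ k • p ^ (s + 1) • w = 0 := by
    rw [← hw] at hk
    simp only [smul_smul, ← pow_add] at hk ⊢
    rw [show s + 1 + (k + (s + 1)) = k + (s + 1 + s) + 1 by ring, pow_succ, mul_comm, mul_smul,
      hk, smul_zero]
  have hπe : π (p ^ k • p ^ (s + 1) • w) = 0 := by
    simp [map_nsmul, nsmul_eq_mul]
  have hce : c • p ^ k • p ^ (s + 1) • w = (1 + p * l) • g := by
    rw [← hw]
    simp only [← natCast_zsmul, smul_smul]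
    congr 1
    push_cast at hl ⊢
    linear_combination (p : ℤ) ^ (s + 1) * hl
  have hcop : IsCoprime ((p : ℤ) ^ k) (1 + p * l) :=
    (isCoprime_one_right.add_mul_left_right l).pow_left
  refine H.mem_of_zsmul_mem_of_isCoprime (by exact_mod_cast hk) hcop ?_
  exact hce ▸ H.zsmul_mem_of_forall_addEquiv_mem hH π he hπe hhH hc
end

section
/- Every strongly IC abelian group is an IC-group, every IC-group is an IFI-group, and a nonzero torsion abelian group is a strongly IC-group if and only if it is an elementary abelian p-group for some prime p. -/
/-!
Every fully invariant subgroup is characteristic, so strongly IC ⇒ IC ⇒ IFI is formal.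
For a nonzero torsion group, an element of prime order `p` shows that the `p`-torsion subgroup
`G[p]` is a nonzero characteristic subgroup; if `G` is strongly IC, then `G ≅ G[p]`, so `p`
kills `G`. Conversely, an elementary abelian `p`-group is an `𝔽_p`-vector space whose
automorphism group acts transitively on nonzero vectors, so its only nonzero characteristic
subgroup is `G` itself.
-/

/-- A characteristic subgroup: invariant under all automorphisms. -/
def IsCharSub {G : Type*} [AddCommGroup G] (H : AddSubgroup G) : Prop :=
  ∀ φ : G ≃+ G, ∀ x ∈ H, φ x ∈ H

/-- A fully invariant subgroup: invariant under all endomorphisms. -/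
def IsFullyInvSub {G : Type*} [AddCommGroup G] (H : AddSubgroup G) : Prop :=
  ∀ f : G →+ G, ∀ x ∈ H, f x ∈ H

/-- An IC-group: all non-trivial proper characteristic subgroups are isomorphic
(vacuously true if there are only trivial ones). -/
def IsICGroup (G : Type*) [AddCommGroup G] : Prop :=
  ∀ H K : AddSubgroup G, IsCharSub H → IsCharSub K →
    H ≠ ⊥ → H ≠ ⊤ → K ≠ ⊥ → K ≠ ⊤ → Nonempty (H ≃+ K)

/-- An IFI-group: all non-trivial proper fully invariant subgroups are isomorphic. -/
def IsIFIGroup (G : Type*) [AddCommGroup G] : Prop :=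
  ∀ H K : AddSubgroup G, IsFullyInvSub H → IsFullyInvSub K →
    H ≠ ⊥ → H ≠ ⊤ → K ≠ ⊥ → K ≠ ⊤ → Nonempty (H ≃+ K)

/-- A strongly IC-group: all nonzero characteristic subgroups are isomorphic. -/
def IsStronglyICGroup (G : Type*) [AddCommGroup G] : Prop :=
  ∀ H K : AddSubgroup G, IsCharSub H → IsCharSub K →
    H ≠ ⊥ → K ≠ ⊥ → Nonempty (H ≃+ K)

/-- Bases extending `{x}` and `{y}` have equinumerous index sets, and a bijection between them
sending `x` to `y` induces the automorphism. -/
theorem exists_linearEquiv_apply_eq_s19 {K V : Type*} [Field K] [AddCommGroup V] [Module K V]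
    {x y : V} (hx : x ≠ 0) (hy : y ≠ 0) :
    ∃ e : V ≃ₗ[K] V, e x = y := by
  classical
  have lix : LinearIndepOn K id ({x} : Set V) := .singleton hx
  have liy : LinearIndepOn K id ({y} : Set V) := .singleton hy
  let bx := Module.Basis.extend lix
  let by' := Module.Basis.extend liy
  obtain ⟨σ⟩ := Cardinal.eq.mp (mk_eq_mk_of_basis' bx by')
  let i : lix.extend (Set.subset_univ _) := ⟨x, lix.subset_extend _ rfl⟩
  let j : liy.extend (Set.subset_univ _) := ⟨y, liy.subset_extend _ rfl⟩
  let τ := σ.trans (Equiv.swap (σ i) j)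
  have hτ : τ i = j := by simp [τ]
  refine ⟨bx.equiv by' τ, ?_⟩
  calc bx.equiv by' τ x = bx.equiv by' τ (bx i) := by rw [Module.Basis.extend_apply_self]
    _ = by' (τ i) := bx.equiv_apply i by' τ
    _ = y := by rw [hτ, Module.Basis.extend_apply_self]

section Invariance

variable {G : Type*} [AddCommGroup G]

theorem IsFullyInvSub.isCharSub {H : AddSubgroup G} (hH : IsFullyInvSub H) : IsCharSub H :=
  fun φ => hH φ.toAddMonoidHom

theorem isCharSub_top : IsCharSub (⊤ : AddSubgroup G) :=
  fun _ _ _ => trivial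

theorem isFullyInvSub_ker_nsmul (n : ℕ) : IsFullyInvSub (nsmulAddMonoidHom (α := G) n).ker := by
  intro f x hx
  rw [AddMonoidHom.mem_ker, nsmulAddMonoidHom_apply] at hx ⊢
  rw [← map_nsmul, hx, map_zero]

theorem IsStronglyICGroup.isICGroup (hG : IsStronglyICGroup G) : IsICGroup G :=
  fun H K hH hK hH0 _ hK0 _ => hG H K hH hK hH0 hK0

theorem IsICGroup.isIFIGroup (hG : IsICGroup G) : IsIFIGroup G :=
  fun H K hH hK => hG H K hH.isCharSub hK.isCharSub

end Invariance

section Torsion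

variable {G : Type*} [AddCommGroup G]

theorem exists_prime_nsmul_eq_zero_of_ne_zero {g : G} (hg : IsOfFinAddOrder g) (hg0 : g ≠ 0) :
    ∃ p : ℕ, p.Prime ∧ ∃ h : G, h ≠ 0 ∧ p • h = 0 := by
  have hord : addOrderOf g ≠ 1 := mt AddMonoid.addOrderOf_eq_one_iff.mp hg0
  set p := (addOrderOf g).minFac
  have hp : p.Prime := Nat.minFac_prime hord
  obtain ⟨h, hh⟩ : ∃ h : G, addOrderOf h = p :=
    ⟨_, addOrderOf_nsmul_addOrderOf_sub hg.addOrderOf_pos.ne' (Nat.minFac_dvd _)⟩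
  refine ⟨p, hp, h, fun h0 => ?_, hh ▸ addOrderOf_nsmul_eq_zero h⟩
  rw [h0, addOrderOf_zero] at hh
  exact hp.ne_one hh.symm

theorem nsmul_eq_zero_of_addEquiv {H : Type*} [AddCommGroup H] (e : G ≃+ H) {n : ℕ}
    (hH : ∀ h : H, n • h = 0) (g : G) : n • g = 0 :=
  e.injective (by rw [map_nsmul, hH, map_zero])

theorem IsStronglyICGroup.exists_prime_nsmul_eq_zero [Nontrivial G] (hG : IsStronglyICGroup G)
    (htors : IsAddTorsion G) : ∃ p : ℕ, p.Prime ∧ ∀ g : G, p • g = 0 := by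
  obtain ⟨g, hg0⟩ := exists_ne (0 : G)
  obtain ⟨p, hp, h, hh0, hph⟩ := exists_prime_nsmul_eq_zero_of_ne_zero (htors g) hg0
  let T := (nsmulAddMonoidHom (α := G) p).ker
  have hT0 : T ≠ ⊥ := AddSubgroup.ne_bot_iff_exists_ne_zero.mpr
    ⟨⟨h, hph⟩, fun h0 => hh0 (congrArg Subtype.val h0)⟩
  obtain ⟨e⟩ := hG ⊤ T isCharSub_top (isFullyInvSub_ker_nsmul p).isCharSub top_ne_bot hT0
  exact ⟨p, hp, nsmul_eq_zero_of_addEquiv (AddSubgroup.topEquiv.symm.trans e)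
    (fun t => Subtype.ext t.2)⟩

theorem IsCharSub.eq_top_of_nsmul_eq_zero {p : ℕ} [Fact p.Prime] (hG : ∀ g : G, p • g = 0)
    {H : AddSubgroup G} (hH : IsCharSub H) (hH0 : H ≠ ⊥) : H = ⊤ := by
  let : Module (ZMod p) G := AddCommGroup.zmodModule hG
  obtain ⟨⟨x, hxH⟩, hx⟩ := AddSubgroup.ne_bot_iff_exists_ne_zero.mp hH0
  have hx0 : x ≠ 0 := fun h => hx (Subtype.ext h)
  refine (AddSubgroup.eq_top_iff' H).mpr fun y => ?_
  rcases eq_or_ne y 0 with rfl | hy0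
  · exact H.zero_mem
  · obtain ⟨e, rfl⟩ := exists_linearEquiv_apply_eq_s19 (K := ZMod p) hx0 hy0
    exact hH e.toAddEquiv x hxH

theorem isStronglyICGroup_of_nsmul_eq_zero {p : ℕ} (hp : p.Prime) (hG : ∀ g : G, p • g = 0) :
    IsStronglyICGroup G := by
  have : Fact p.Prime := ⟨hp⟩
  intro H K hH hK hH0 hK0
  rw [hH.eq_top_of_nsmul_eq_zero hG hH0, hK.eq_top_of_nsmul_eq_zero hG hK0]
  exact ⟨AddEquiv.refl _⟩

end Torsion

/-- Every strongly IC abelian group is an IC-group, every IC-group is an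
IFI-group, and a nonzero torsion abelian group is strongly IC iff it is an elementary
abelian `p`-group for some prime `p`. -/
theorem stmt19 :
    (∀ (G : Type u) [AddCommGroup G], IsStronglyICGroup G → IsICGroup G) ∧
    (∀ (G : Type u) [AddCommGroup G], IsICGroup G → IsIFIGroup G) ∧
    (∀ (G : Type u) [AddCommGroup G], Nontrivial G →
      (∀ g : G, ∃ n : ℕ, 0 < n ∧ n • g = 0) →
      (IsStronglyICGroup G ↔ ∃ p : ℕ, p.Prime ∧ ∀ g : G, p • g = 0)) := by
  refine ⟨fun G _ => IsStronglyICGroup.isICGroup, fun G _ => IsICGroup.isIFIGroup, ?_⟩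
  intro G _ _ htors
  have hG : IsAddTorsion G := fun g => isOfFinAddOrder_iff_nsmul_eq_zero.mpr (htors g)
  exact ⟨fun hS => hS.exists_prime_nsmul_eq_zero hG,
    fun ⟨p, hp, hpG⟩ => isStronglyICGroup_of_nsmul_eq_zero hp hpG⟩
end
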